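/- arXiv:2011.11657 — 11 statements merged into one kernel-verified Lean document; each statement's English description precedes it below -/
import Mathlib

section
/- Let L be a finite lattice and let M be a maximal chain of L. Then M is a chief chain (so that L is supersolvable) if and only if M is chain-modular, i.e., every element of M is left-modular and M is right chain-modular. -/
/-- An element `m` of a lattice is *left-modular* if for all `y` and all `x < y`,
`x ⊔ (m ⊓ y) = (x ⊔ m) ⊓ y`. -/
def IsLeftModular {L : Type*} [Lattice L] (m : L) : Prop :=
  ∀ x y : L, x < y → x ⊔ (m ⊓ y) = (x ⊔ m) ⊓ y

/-- A chain `M` in a lattice is *right chain-modular* if for all `x, y ∈ M` with `x < y`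
and all `z`, `x ⊔ (z ⊓ y) = (x ⊔ z) ⊓ y`. -/
def IsRightChainModular {L : Type*} [Lattice L] (M : Set L) : Prop :=
  ∀ x ∈ M, ∀ y ∈ M, x < y → ∀ z : L, x ⊔ (z ⊓ y) = (x ⊔ z) ⊓ y

/-- A chain is *chain-modular* if it is right chain-modular and all its elements are
left-modular. -/
def IsChainModular {L : Type*} [Lattice L] (M : Set L) : Prop :=
  IsRightChainModular M ∧ ∀ m ∈ M, IsLeftModular m

/-- A (maximal) chain `M` is a *chief chain* if for every chain `C`, the sublattice
generated by `M ∪ C` is distributive. -/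
def IsChiefChain {L : Type*} [Lattice L] (M : Set L) : Prop :=
  ∀ C : Set L, IsChain (· ≤ ·) C →
    ∀ a ∈ latticeClosure (M ∪ C), ∀ b ∈ latticeClosure (M ∪ C),
      ∀ c ∈ latticeClosure (M ∪ C), a ⊓ (b ⊔ c) = (a ⊓ b) ⊔ (a ⊓ c)

section AuxChief
set_option linter.unusedSectionVars false

section Aux
variable {L : Type*} [Lattice L]

lemma lm_le {m : L} (hm : IsLeftModular m) {u v : L} (h : u ≤ v) :
    u ⊔ (m ⊓ v) = (u ⊔ m) ⊓ v := by
  rcases h.lt_or_eq with h | rfl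
  · exact hm u v h
  · rw [inf_comm, sup_inf_self, inf_eq_right.2 le_sup_left]

variable [OrderBot L]

/-- `XX m c j = ⋁_{i<j} (m i ⊓ c i)`. -/
def XX (m c : ℕ → L) (j : ℕ) : L := (Finset.range j).sup fun i => m i ⊓ c i

lemma XX_succ (m c : ℕ → L) (j : ℕ) : XX m c (j + 1) = XX m c j ⊔ (m j ⊓ c j) := by
  rw [XX, XX, Finset.range_add_one, Finset.sup_insert, sup_comm]

lemma XX_zero (m c : ℕ → L) : XX m c 0 = ⊥ := rfl

lemma XX_shift (m c : ℕ → L) (j : ℕ) :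
    XX m c (j + 1) = (m 0 ⊓ c 0) ⊔ XX (fun i => m (i + 1)) (fun i => c (i + 1)) j := by
  induction j with
  | zero => simp [XX]
  | succ n ih => rw [XX_succ, ih, XX_succ, sup_assoc]

lemma XX_mono_j (m c : ℕ → L) {j j' : ℕ} (h : j ≤ j') : XX m c j ≤ XX m c j' :=
  Finset.sup_mono (Finset.range_subset_range.2 h)

lemma XX_le (m c : ℕ → L) {j : ℕ} {y : L} (h : ∀ i < j, m i ⊓ c i ≤ y) : XX m c j ≤ y :=
  Finset.sup_le fun i hi => h i (Finset.mem_range.1 hi)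

lemma le_XX (m c : ℕ → L) {j i : ℕ} (h : i < j) : m i ⊓ c i ≤ XX m c j :=
  Finset.le_sup (f := fun i => m i ⊓ c i) (Finset.mem_range.2 h)

lemma dec_le {c : ℕ → L} {j : ℕ} (hc : ∀ i, i + 1 < j → c (i + 1) ≤ c i) :
    ∀ i, i < j → c i ≤ c 0 := by
  intro i hi
  induction i with
  | zero => exact le_rfl
  | succ n ih => exact (hc n hi).trans (ih (Nat.lt_of_succ_lt hi))

lemma XX_le_c0 {m c : ℕ → L} {j : ℕ} (hc : ∀ i, i + 1 < j → c (i + 1) ≤ c i) :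
    XX m c j ≤ c 0 :=
  XX_le m c fun i hi => inf_le_right.trans (dec_le hc i hi)

end Aux

section Main
variable {L : Type*} [Lattice L] [OrderBot L]

/-- Nested form: `XX m c (j+1) = (XX (shift m) (shift c) j ⊔ m 0) ⊓ c 0`. -/
lemma XX_nested {m c : ℕ → L} {j : ℕ}
    (hlm : IsLeftModular (m 0))
    (hc : ∀ i, i + 1 < j + 1 → c (i + 1) ≤ c i) :
    XX m c (j + 1) = (XX (fun i => m (i + 1)) (fun i => c (i + 1)) j ⊔ m 0) ⊓ c 0 := by
  have hXs : XX (fun i => m (i + 1)) (fun i => c (i + 1)) j ≤ c 0 := by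
    rcases j with _ | j'
    · simp [XX_zero]
    · exact (XX_le_c0 (fun i hi => hc (i + 1) (by omega))).trans (hc 0 (by omega))
  rw [XX_shift, sup_comm, lm_le hlm hXs]

lemma lemA : ∀ (k : ℕ) (m c : ℕ → L) (j : ℕ),
    (∀ i, i < j → IsLeftModular (m i)) →
    (∀ i i', i < i' → i' < j → ∀ z : L, m i ⊔ (z ⊓ m i') = (m i ⊔ z) ⊓ m i') →
    (∀ i, i + 1 < j → c (i + 1) ≤ c i) →
    k < j → XX m c j ⊓ m k = XX m c (k + 1) := by
  intro k
  induction k with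
  | zero =>
    intro m c j hlm hrcm hc hk
    obtain ⟨j', rfl⟩ : ∃ j', j = j' + 1 := ⟨j - 1, by omega⟩
    rw [XX_nested (hlm 0 hk) hc]
    have h0 : (XX (fun i => m (i + 1)) (fun i => c (i + 1)) j' ⊔ m 0) ⊓ m 0 = m 0 :=
      inf_eq_right.2 le_sup_right
    rw [inf_right_comm, h0, XX, Finset.range_one, Finset.sup_singleton]
  | succ k ih =>
    intro m c j hlm hrcm hc hk
    obtain ⟨j', rfl⟩ : ∃ j', j = j' + 1 := ⟨j - 1, by omega⟩
    rw [XX_nested (hlm 0 (by omega)) hc]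
    set Xs := XX (fun i => m (i + 1)) (fun i => c (i + 1)) j' with hXsdef
    have step2 : (Xs ⊔ m 0) ⊓ m (k + 1) = m 0 ⊔ (Xs ⊓ m (k + 1)) := by
      rw [sup_comm, ← hrcm 0 (k + 1) (by omega) hk Xs]
    have hIH : Xs ⊓ m (k + 1) = XX (fun i => m (i + 1)) (fun i => c (i + 1)) (k + 1) :=
      ih (fun i => m (i + 1)) (fun i => c (i + 1)) j'
        (fun i hi => hlm (i + 1) (by omega))
        (fun i i' hii' hi' z => hrcm (i + 1) (i' + 1) (by omega) (by omega) z)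
        (fun i hi => hc (i + 1) (by omega)) (by omega)
    have hP : XX (fun i => m (i + 1)) (fun i => c (i + 1)) (k + 1) ≤ c 0 := by
      rcases Nat.eq_or_lt_of_le (Nat.one_le_iff_ne_zero.2 (by omega) :
          1 ≤ j' + 1) with _ | _
      · exact (XX_le_c0 (fun i hi => hc (i + 1) (by omega))).trans (hc 0 (by omega))
      · exact (XX_le_c0 (fun i hi => hc (i + 1) (by omega))).trans (hc 0 (by omega))
    rw [inf_right_comm, step2, hIH, sup_comm (m 0), ← lm_le (hlm 0 (by omega)) hP, XX_shift m c (k + 1), sup_comm]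

/-- Join of two normal forms, for pointwise-comparable sequences. -/
lemma lemJL (m c d : ℕ → L) (j : ℕ) (hcomp : ∀ i < j, c i ≤ d i ∨ d i ≤ c i) :
    XX m c j ⊔ XX m d j = XX m (fun i => c i ⊔ d i) j := by
  apply le_antisymm
  · exact sup_le (XX_le m c fun i hi => (le_XX m _ hi).trans' (inf_le_inf_left _ le_sup_left))
      (XX_le m d fun i hi => (le_XX m _ hi).trans' (inf_le_inf_left _ le_sup_right))
  · refine XX_le m _ fun i hi => ?_
    rcases hcomp i hi with h | h
    · rw [sup_eq_right.2 h]; exact (le_XX m d hi).trans le_sup_right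
    · rw [sup_eq_left.2 h]; exact (le_XX m c hi).trans le_sup_left

/-- The key lemma: meet of two normal forms is the pointwise-meet normal form. -/
lemma lemML (m : ℕ → L) (j : ℕ)
    (hlm : ∀ i, i < j → IsLeftModular (m i))
    (hrcm : ∀ i i', i < i' → i' < j → ∀ z : L, m i ⊔ (z ⊓ m i') = (m i ⊔ z) ⊓ m i')
    (hmono : ∀ i i', i ≤ i' → i' < j → m i ≤ m i') :
    ∀ c d : ℕ → L, (∀ i, i + 1 < j → c (i + 1) ≤ c i) →
      (∀ i, i + 1 < j → d (i + 1) ≤ d i) →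
      (∀ i, i < j → c i ≤ d i ∨ d i ≤ c i) →
      XX m c j ⊓ XX m d j = XX m (fun i => c i ⊓ d i) j := by
  induction j with
  | zero => intro c d _ _ _; simp [XX_zero]
  | succ j ihj =>
    intro c d hc hd hcomp
    -- one-sided step, assuming `c j ≤ d j`
    have key : ∀ c d : ℕ → L, (∀ i, i + 1 < j + 1 → c (i + 1) ≤ c i) →
        (∀ i, i + 1 < j + 1 → d (i + 1) ≤ d i) →
        (∀ i, i < j + 1 → c i ≤ d i ∨ d i ≤ c i) → c j ≤ d j →
        XX m c (j + 1) ⊓ XX m d (j + 1) ≤ XX m (fun i => c i ⊓ d i) (j + 1) := by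
      intro c d hc hd hcomp hcd
      rcases Nat.eq_zero_or_pos j with rfl | hj
      · rw [show (0 + 1) = 1 from rfl, XX, XX, XX, Finset.range_one, Finset.sup_singleton,
          Finset.sup_singleton, Finset.sup_singleton]
        exact le_inf (inf_le_left.trans inf_le_left)
          (inf_le_inf (inf_le_right (a := m 0)) (inf_le_right (a := m 0)))
      obtain ⟨j'', rfl⟩ : ∃ j'', j = j'' + 1 := ⟨j - 1, by omega⟩
      set w := XX m c (j'' + 1 + 1) ⊓ XX m d (j'' + 1 + 1) with hw
      set Z := XX m (fun i => c i ⊓ d i) (j'' + 1 + 1) with hZ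
      set γ := m (j'' + 1) ⊓ c (j'' + 1) with hγ
      have hγZ : γ ≤ Z := by
        have : m (j'' + 1) ⊓ (c (j'' + 1) ⊓ d (j'' + 1)) = γ := by
          rw [inf_eq_left.2 hcd]
        exact this ▸ le_XX m (fun i => c i ⊓ d i) (Nat.lt_succ_self _)
      have hγw : γ ≤ w := le_inf (le_XX m c (by omega))
        ((inf_le_inf_left _ hcd).trans (le_XX m d (by omega)))
      have hwm : w ⊓ m j'' ≤ Z := by
        have h1 : w ⊓ m j'' = (XX m c (j'' + 1 + 1) ⊓ m j'') ⊓ (XX m d (j'' + 1 + 1) ⊓ m j'') := by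
          rw [hw, inf_inf_distrib_right]
        rw [h1, lemA j'' m c (j'' + 1 + 1) hlm hrcm hc (by omega),
          lemA j'' m d (j'' + 1 + 1) hlm hrcm hd (by omega),
          ihj (fun i hi => hlm i (by omega)) (fun i i' h h' z => hrcm i i' h (by omega) z)
            (fun i i' h h' => hmono i i' h (by omega)) c d
            (fun i hi => hc i (by omega)) (fun i hi => hd i (by omega))
            (fun i hi => hcomp i (by omega))]
        exact XX_mono_j m _ (by omega)
      have hwle : w ≤ m j'' ⊔ γ := by
        refine inf_le_left.trans ?_
        rw [XX_succ]
        exact sup_le_sup_right (XX_le m c fun i hi =>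
          inf_le_left.trans (hmono i j'' (by omega) (by omega))) _
      rcases hγw.lt_or_eq with hlt | heq
      · have := lm_le (hlm j'' (by omega)) hlt.le
        -- γ ⊔ (m j'' ⊓ w) = (γ ⊔ m j'') ⊓ w = w
        have h2 : (γ ⊔ m j'') ⊓ w = w := inf_eq_right.2 (hwle.trans (sup_comm _ _).le)
        calc w = γ ⊔ (m j'' ⊓ w) := by rw [this, h2]
        _ ≤ Z ⊔ Z := sup_le_sup hγZ ((inf_comm _ _).le.trans hwm)
        _ = Z := sup_idem _
      · exact heq ▸ hγZ
    apply le_antisymm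
    · rcases hcomp j (by omega) with h | h
      · exact key c d hc hd hcomp h
      · have := key d c hd hc (fun i hi => (hcomp i hi).symm) h
        rw [inf_comm] at this
        refine this.trans (le_of_eq ?_)
        exact Finset.sup_congr rfl fun i _ => by show m i ⊓ (d i ⊓ c i) = m i ⊓ (c i ⊓ d i); rw [inf_comm (d i) (c i)]
    · exact le_inf (XX_le m _ fun i hi => (le_XX m c hi).trans' (inf_le_inf_left _ inf_le_left))
        (XX_le m _ fun i hi => (le_XX m d hi).trans' (inf_le_inf_left _ inf_le_right))

end Main

end AuxChief

/-- A maximal chain `M` of a finite lattice `L` is a chief chain (so that `L` is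
supersolvable) if and only if `M` is chain-modular. -/
theorem chiefChain_iff_chainModular {L : Type*} [Lattice L] [Fintype L]
    (M : Set L) (hM : IsMaxChain (· ≤ ·) M) :
    IsChiefChain M ↔ IsChainModular M := by
  classical
  rcases isEmpty_or_nonempty L with hL | hL
  · constructor
    · intro _
      exact ⟨fun x hx => isEmptyElim x, fun m hm => isEmptyElim m⟩
    · intro _ C hC a ha
      exact isEmptyElim a
  constructor
  · -- Chief chain ⇒ chain-modular
    intro h
    constructor
    · intro x hx y hy hxy z
      have hC : IsChain (· ≤ ·) ({z} : Set L) := Set.subsingleton_singleton.isChain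
      have key := h {z} hC y (subset_latticeClosure (Set.mem_union_left _ hy))
        x (subset_latticeClosure (Set.mem_union_left _ hx))
        z (subset_latticeClosure (Set.mem_union_right _ rfl))
      calc x ⊔ (z ⊓ y) = (y ⊓ x) ⊔ (y ⊓ z) := by rw [inf_comm z y, inf_eq_right.2 hxy.le]
        _ = y ⊓ (x ⊔ z) := key.symm
        _ = (x ⊔ z) ⊓ y := inf_comm _ _
    · intro m hm x y hxy
      have hC : IsChain (· ≤ ·) ({x, y} : Set L) := by
        intro u hu v hv huv
        rcases hu with rfl | rfl <;> rcases hv with rfl | rfl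
        · exact absurd rfl huv
        · exact Or.inl hxy.le
        · exact Or.inr hxy.le
        · exact absurd rfl huv
      have key := h {x, y} hC y
        (subset_latticeClosure (Set.mem_union_right _ (Set.mem_insert_of_mem _ rfl)))
        x (subset_latticeClosure (Set.mem_union_right _ (Set.mem_insert _ _)))
        m (subset_latticeClosure (Set.mem_union_left _ hm))
      calc x ⊔ (m ⊓ y) = (y ⊓ x) ⊔ (y ⊓ m) := by rw [inf_comm m y, inf_eq_right.2 hxy.le]
        _ = y ⊓ (x ⊔ m) := key.symm
        _ = (x ⊔ m) ⊓ y := inf_comm _ _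
  · -- Chain-modular ⇒ chief chain
    rintro ⟨hrcm, hlm⟩ C hC a ha b hb c hc
    -- M is nonempty
    have hne : M.Nonempty := by
      rcases Set.eq_empty_or_nonempty M with rfl | h
      · obtain ⟨x⟩ := hL
        have h1 := hM.2 (Set.subsingleton_singleton (a := x)).isChain (Set.empty_subset _)
        exact absurd h1.symm (by simp)
      · exact h
    haveI : Fintype ↥M := (Set.toFinite M).fintype
    letI : LinearOrder ↥M :=
      { Subtype.partialOrder _ with
        le_total := fun a b => hM.1.total a.2 b.2
        toDecidableLE := Subtype.decidableLE
        toDecidableLT := Subtype.decidableLT }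
    set N := Fintype.card ↥M with hNdef
    have hN : 0 < N := Fintype.card_pos_iff.2 hne.to_subtype
    let e : Fin N ≃o ↥M := monoEquivOfFin ↥M rfl
    set m : ℕ → L := fun i => if h : i < N then (e ⟨i, h⟩ : L) else (e ⟨N - 1, by omega⟩ : L)
      with hmdef
    have hmem : ∀ i, i < N → m i ∈ M := by
      intro i hi; simp only [hmdef, dif_pos hi]; exact (e ⟨i, hi⟩).2
    have hmlt : ∀ i i', i < i' → i' < N → m i < m i' := by
      intro i i' h h'
      simp only [hmdef, dif_pos (h.trans h'), dif_pos h']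
      exact Subtype.coe_lt_coe.2 (e.strictMono (Fin.mk_lt_mk.2 h))
    have hmono : ∀ i i', i ≤ i' → i' < N → m i ≤ m i' := by
      intro i i' h h'
      rcases h.lt_or_eq with h | rfl
      · exact (hmlt i i' h h').le
      · exact le_rfl
    have hsurj : ∀ x ∈ M, ∃ k, ∃ hk : k < N, m k = x := by
      intro x hx
      refine ⟨(e.symm ⟨x, hx⟩ : Fin N), (e.symm ⟨x, hx⟩).2, ?_⟩
      simp only [hmdef, dif_pos (e.symm ⟨x, hx⟩).2]
      rw [show (⟨(e.symm ⟨x, hx⟩ : Fin N), (e.symm ⟨x, hx⟩).2⟩ : Fin N) = e.symm ⟨x, hx⟩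
        from rfl, e.apply_symm_apply]
    -- every element of M is below m (N-1), above m 0
    have hleTop : ∀ y ∈ M, y ≤ m (N - 1) := by
      intro y hy
      obtain ⟨k, hk, rfl⟩ := hsurj y hy
      exact hmono k (N - 1) (by omega) (by omega)
    have hleBot : ∀ y ∈ M, m 0 ≤ y := by
      intro y hy
      obtain ⟨k, hk, rfl⟩ := hsurj y hy
      exact hmono 0 k (by omega) hk
    -- maximality: anything comparable with all of M is in M
    have hmax : ∀ z : L, (∀ y ∈ M, z ≤ y ∨ y ≤ z) → z ∈ M := by
      intro z hz
      have hch : IsChain (· ≤ ·) (insert z M) :=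
        hM.1.insert fun b hb _ => hz b hb
      have := hM.2 hch (Set.subset_insert _ _)
      rw [this]; exact Set.mem_insert _ _
    set t := m (N - 1) with htdef
    set bo := m 0 with hbodef
    have htop : ∀ x : L, x ≤ t := by
      intro x
      have hmemM : t ⊔ x ∈ M := by
        refine hmax _ fun y hy => Or.inr ((hleTop y hy).trans le_sup_left)
      exact le_sup_right.trans (hleTop _ hmemM)
    have hbot : ∀ x : L, bo ≤ x := by
      intro x
      have hmemM : bo ⊓ x ∈ M :=
        hmax _ fun y hy => Or.inl (inf_le_left.trans (hleBot y hy))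
      exact inf_le_right.trans' (hleBot _ hmemM)
    letI : OrderBot L := { bot := bo, bot_le := hbot }
    -- index versions of the modularity hypotheses
    have hlmI : ∀ i, i < N → IsLeftModular (m i) := fun i hi => hlm _ (hmem i hi)
    have hrcmI : ∀ i i', i < i' → i' < N → ∀ z : L,
        m i ⊔ (z ⊓ m i') = (m i ⊔ z) ⊓ m i' := fun i i' h h' z =>
      hrcm _ (hmem i (h.trans h')) _ (hmem i' h') (hmlt i i' h h') z
    -- the extended chain
    set C' : Set L := insert t (insert bo C) with hC'def
    have hC' : IsChain (· ≤ ·) C' := by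
      refine IsChain.insert ?_ fun y hy _ => Or.inr (htop y)
      exact hC.insert fun y hy _ => Or.inl (hbot y)
    have htot : ∀ {u v : L}, u ∈ C' → v ∈ C' → u ≤ v ∨ v ≤ u :=
      fun hu hv => hC'.total hu hv
    have htC' : t ∈ C' := Set.mem_insert _ _
    have hboC' : bo ∈ C' := Set.mem_insert_of_mem _ (Set.mem_insert _ _)
    -- the candidate sublattice
    set D : Set L := {x | ∃ cs : ℕ → L, (∀ i, cs i ∈ C') ∧ (∀ i, cs (i + 1) ≤ cs i) ∧
      x = XX m cs N} with hDdef
    have hsupD : SupClosed D := by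
      rintro x ⟨p, hp1, hp2, rfl⟩ y ⟨q, hq1, hq2, rfl⟩
      refine ⟨fun i => p i ⊔ q i, fun i => ?_, fun i => sup_le_sup (hp2 i) (hq2 i), ?_⟩
      · show p i ⊔ q i ∈ C'
        rcases htot (hp1 i) (hq1 i) with h | h
        · rw [sup_eq_right.2 h]; exact hq1 i
        · rw [sup_eq_left.2 h]; exact hp1 i
      · exact (lemJL m p q N fun i _ => htot (hp1 i) (hq1 i))
    have hinfD : InfClosed D := by
      rintro x ⟨p, hp1, hp2, rfl⟩ y ⟨q, hq1, hq2, rfl⟩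
      refine ⟨fun i => p i ⊓ q i, fun i => ?_, fun i => inf_le_inf (hp2 i) (hq2 i), ?_⟩
      · show p i ⊓ q i ∈ C'
        rcases htot (hp1 i) (hq1 i) with h | h
        · rw [inf_eq_left.2 h]; exact hp1 i
        · rw [inf_eq_right.2 h]; exact hq1 i
      · exact lemML m N hlmI hrcmI hmono p q (fun i _ => hp2 i) (fun i _ => hq2 i)
          (fun i _ => htot (hp1 i) (hq1 i))
    have hMD : M ⊆ D := by
      intro x hx
      obtain ⟨k, hk, rfl⟩ := hsurj x hx
      refine ⟨fun i => if i ≤ k then t else bo, fun i => ?_, fun i => ?_, ?_⟩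
      · dsimp only; split_ifs
        · exact htC'
        · exact hboC'
      · dsimp only; split_ifs with h1 h2
        · exact le_rfl
        · omega
        · exact hbot t
        · exact le_rfl
      · refine (le_antisymm (XX_le m _ fun i hi => ?_) ((le_XX m _ hk).trans' ?_)).symm
        · split_ifs with h
          · exact inf_le_left.trans (hmono i k h hk)
          · exact inf_le_right.trans (hbot _)
        · rw [if_pos le_rfl]
          exact le_inf le_rfl (htop _)
    have hCD : C ⊆ D := by
      intro x hx
      refine ⟨fun _ => x, fun i => Set.mem_insert_of_mem _ (Set.mem_insert_of_mem _ hx),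
        fun i => le_rfl, ?_⟩
      refine (le_antisymm (XX_le m _ fun i hi => inf_le_right)
        ((le_XX m _ (show N - 1 < N by omega)).trans' (le_inf (htop x) le_rfl))).symm
    have hclos : latticeClosure (M ∪ C) ⊆ D :=
      latticeClosure_min (Set.union_subset hMD hCD) ⟨hsupD, hinfD⟩
    obtain ⟨p, hp1, hp2, rfl⟩ := hclos ha
    obtain ⟨q, hq1, hq2, rfl⟩ := hclos hb
    obtain ⟨r, hr1, hr2, rfl⟩ := hclos hc
    have hML := lemML m N hlmI hrcmI hmono
    have memInf : ∀ (u v : ℕ → L), (∀ i, u i ∈ C') → (∀ i, v i ∈ C') →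
        ∀ i, u i ⊓ v i ∈ C' := by
      intro u v hu hv i
      rcases htot (hu i) (hv i) with h | h
      · rw [inf_eq_left.2 h]; exact hu i
      · rw [inf_eq_right.2 h]; exact hv i
    calc XX m p N ⊓ (XX m q N ⊔ XX m r N)
        = XX m p N ⊓ XX m (fun i => q i ⊔ r i) N := by
          rw [lemJL m q r N fun i _ => htot (hq1 i) (hr1 i)]
      _ = XX m (fun i => p i ⊓ (q i ⊔ r i)) N := by
          refine hML p (fun i => q i ⊔ r i) (fun i _ => hp2 i)
            (fun i _ => sup_le_sup (hq2 i) (hr2 i)) (fun i _ => ?_)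
          refine htot (hp1 i) ?_
          show q i ⊔ r i ∈ C'
          rcases htot (hq1 i) (hr1 i) with h | h
          · rw [sup_eq_right.2 h]; exact hr1 i
          · rw [sup_eq_left.2 h]; exact hq1 i
      _ = XX m (fun i => (p i ⊓ q i) ⊔ (p i ⊓ r i)) N := by
          refine Finset.sup_congr rfl fun i _ => ?_
          show m i ⊓ (p i ⊓ (q i ⊔ r i)) = m i ⊓ ((p i ⊓ q i) ⊔ (p i ⊓ r i))
          rcases htot (hq1 i) (hr1 i) with h | h
          · rw [sup_eq_right.2 h, sup_eq_right.2 (inf_le_inf_left (p i) h)]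
          · rw [sup_eq_left.2 h, sup_eq_left.2 (inf_le_inf_left (p i) h)]
      _ = XX m (fun i => p i ⊓ q i) N ⊔ XX m (fun i => p i ⊓ r i) N := by
          refine (lemJL m _ _ N fun i _ => ?_).symm
          exact htot (memInf p q hp1 hq1 i) (memInf p r hp1 hr1 i)
      _ = (XX m p N ⊓ XX m q N) ⊔ (XX m p N ⊓ XX m r N) := by
          rw [hML p q (fun i _ => hp2 i) (fun i _ => hq2 i)
              (fun i _ => htot (hp1 i) (hq1 i)),
            hML p r (fun i _ => hp2 i) (fun i _ => hr2 i)
              (fun i _ => htot (hp1 i) (hr1 i))]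
end

section
/- Let L be a finite lattice and let M be a maximal chain of L. Then M is a chief chain if and only if L is graded with some rank function ρ : L → ℕ and every element of M is rank modular with respect to ρ. -/
/-- `ρ` is a rank function for the lattice `L`: `ρ ⊥ = 0` and `ρ y = ρ x + 1`
whenever `y` covers `x`. -/
def IsRankFunction {L : Type*} [Lattice L] [OrderBot L] (ρ : L → ℕ) : Prop :=
  ρ ⊥ = 0 ∧ ∀ x y : L, x ⋖ y → ρ y = ρ x + 1

/-- An element `m` is *rank modular* with respect to `ρ` if
`ρ (m ⊔ x) + ρ (m ⊓ x) = ρ m + ρ x` for all `x`. -/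
def IsRankModular {L : Type*} [Lattice L] (ρ : L → ℕ) (m : L) : Prop :=
  ∀ x : L, ρ (m ⊔ x) + ρ (m ⊓ x) = ρ m + ρ x

section ChiefChainProof

open Finset

set_option linter.unusedSectionVars false

variable {L : Type*} [Lattice L]

theorem IsRankFunction.lt_of_lt [OrderBot L] [Finite L] {ρ : L → ℕ} (hρ : IsRankFunction ρ) :
    ∀ a b : L, a < b → ρ a < ρ b := by
  have wf : WellFounded ((· > ·) : L → L → Prop) := (Finite.to_wellFoundedGT).wf
  intro a
  induction a using wf.induction with
  | _ a IH =>
    intro b hab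
    obtain ⟨c, hac, hcb⟩ := exists_covBy_le_of_lt hab
    have h2 := hρ.2 _ _ hac
    rcases eq_or_lt_of_le hcb with rfl | h
    · omega
    · have h1 := IH c hac.lt b h
      omega

theorem IsRankFunction.eq_of_le_of_rank_eq [OrderBot L] [Finite L] {ρ : L → ℕ}
    (hρ : IsRankFunction ρ) {a b : L} (h : a ≤ b) (hr : ρ a = ρ b) : a = b := by
  rcases eq_or_lt_of_le h with rfl | h
  · rfl
  · exact absurd hr (hρ.lt_of_lt _ _ h).ne

theorem IsRankModular.leftMod [OrderBot L] [Finite L] {ρ : L → ℕ} (hρ : IsRankFunction ρ)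
    {m : L} (hm : IsRankModular ρ m) {x y : L} (hxy : x ≤ y) :
    x ⊔ (m ⊓ y) = (x ⊔ m) ⊓ y := by
  set a := x ⊔ (m ⊓ y) with ha
  set b := (x ⊔ m) ⊓ y with hb
  have hab : a ≤ b := sup_le (le_inf le_sup_left hxy)
    (le_inf (inf_le_left.trans le_sup_right) inf_le_right)
  have h1 : m ⊔ a = m ⊔ x := by
    rw [ha, sup_comm x, ← sup_assoc, sup_inf_self, sup_comm m x]
  have h2 : m ⊔ b = m ⊔ x := by
    apply le_antisymm
    · exact sup_le le_sup_left (inf_le_left.trans (sup_le le_sup_right le_sup_left))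
    · exact sup_le le_sup_left ((le_inf le_sup_left hxy).trans le_sup_right)
  have h4 : m ⊓ b = m ⊓ a := by
    apply le_antisymm
    · exact le_inf inf_le_left
        (le_sup_of_le_right (le_inf inf_le_left (inf_le_right.trans inf_le_right)))
    · exact inf_le_inf_left m hab
  have e1 := hm a
  have e2 := hm b
  rw [h1] at e1
  rw [h2, h4] at e2
  exact hρ.eq_of_le_of_rank_eq hab (by omega)

theorem IsRankModular.pairMod [OrderBot L] [Finite L] {ρ : L → ℕ} (hρ : IsRankFunction ρ)
    {m m' : L} (hm : IsRankModular ρ m) (hm' : IsRankModular ρ m') (hmm' : m ≤ m') (z : L) :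
    m ⊔ (z ⊓ m') = (m ⊔ z) ⊓ m' := by
  have hab : m ⊔ (z ⊓ m') ≤ (m ⊔ z) ⊓ m' := sup_le (le_inf le_sup_left hmm')
    (le_inf (inf_le_left.trans le_sup_right) inf_le_right)
  have e1 := hm (z ⊓ m')
  have e2 := hm' (m ⊔ z)
  have e3 := hm' z
  have e4 := hm z
  have r1 : m ⊓ (z ⊓ m') = m ⊓ z := by
    apply le_antisymm
    · exact le_inf inf_le_left (inf_le_right.trans inf_le_left)
    · exact le_inf inf_le_left (le_inf inf_le_right (inf_le_left.trans hmm'))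
  have r2 : m' ⊔ (m ⊔ z) = m' ⊔ z := by
    apply le_antisymm
    · exact sup_le le_sup_left (sup_le (hmm'.trans le_sup_left) le_sup_right)
    · exact sup_le le_sup_left (le_sup_of_le_right le_sup_right)
  have r3 : m' ⊓ (m ⊔ z) = (m ⊔ z) ⊓ m' := inf_comm _ _
  have r4 : m' ⊓ z = z ⊓ m' := inf_comm _ _
  rw [r1] at e1
  rw [r4] at e3
  rw [r2, r3] at e2
  exact hρ.eq_of_le_of_rank_eq hab (by omega)

variable {L : Type*} [Lattice L]

theorem IsMaxChain.exists_enum [Fintype L] [BoundedOrder L] {M : Set L}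
    (hM : IsMaxChain (· ≤ ·) M) :
    ∃ (n : ℕ) (m : Fin (n + 1) → L), StrictMono m ∧ Set.range m = M ∧ m 0 = ⊥ ∧
      m (Fin.last n) = ⊤ ∧ ∀ i : Fin n, m i.castSucc ⋖ m i.succ := by
  classical
  have hbot : ⊥ ∈ M := hM.bot_mem
  have htop : ⊤ ∈ M := hM.top_mem
  letI : LinearOrder ↥M :=
    { (inferInstance : PartialOrder ↥M) with
      le_total := fun x y => hM.isChain.total x.2 y.2
      toDecidableLE := Classical.decRel _
      toDecidableEq := Classical.decRel _
      toDecidableLT := Classical.decRel _ }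
  letI : Fintype ↥M := Set.toFinite M |>.fintype
  have hcard : 0 < Fintype.card ↥M := Fintype.card_pos_iff.2 ⟨⟨⊥, hbot⟩⟩
  obtain ⟨n, hn⟩ : ∃ n, Fintype.card ↥M = n + 1 := ⟨Fintype.card ↥M - 1, by omega⟩
  set e := monoEquivOfFin ↥M hn with he
  refine ⟨n, fun i => (e i : L), ?_, ?_, ?_, ?_, ?_⟩
  · exact fun i j hij => Subtype.coe_lt_coe.2 (e.strictMono hij)
  · ext z
    constructor
    · rintro ⟨i, rfl⟩; exact (e i).2
    · intro hz; exact ⟨e.symm ⟨z, hz⟩, by simp⟩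
  · have h1 : (e 0 : L) ≤ ⊥ := by
      have : e 0 ≤ ⟨⊥, hbot⟩ := by
        have := e.symm ⟨⊥, hbot⟩
        calc e 0 ≤ e (e.symm ⟨⊥, hbot⟩) := e.monotone (Fin.zero_le _)
        _ = ⟨⊥, hbot⟩ := e.apply_symm_apply _
      exact this
    exact le_bot_iff.1 h1
  · have h1 : (⊤ : L) ≤ (e (Fin.last n) : L) := by
      have : (⟨⊤, htop⟩ : ↥M) ≤ e (Fin.last n) := by
        calc (⟨⊤, htop⟩ : ↥M) = e (e.symm ⟨⊤, htop⟩) := (e.apply_symm_apply _).symm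
        _ ≤ e (Fin.last n) := e.monotone (Fin.le_last _)
      exact this
    exact top_le_iff.1 h1
  · intro i
    constructor
    · exact Subtype.coe_lt_coe.2 (e.strictMono (Fin.castSucc_lt_succ (i := i)))
    · intro t h1 h2
      -- t is not in M
      have htM : t ∉ M := by
        intro htM
        set k := e.symm ⟨t, htM⟩ with hk
        have hek : (e k : L) = t := by rw [hk]; exact congrArg _ (e.apply_symm_apply _)
        have hlt1 : i.castSucc < k := by
          have := e.symm.strictMono (a := e i.castSucc) (b := ⟨t, htM⟩) (Subtype.coe_lt_coe.1 (by exact h1))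
          simpa using this
        have hlt2 : k < i.succ := by
          have := e.symm.strictMono (a := (⟨t, htM⟩ : ↥M)) (b := e i.succ) (Subtype.coe_lt_coe.1 (by exact h2))
          simpa using this
        have := hlt1.trans hlt2
        simp only [Fin.lt_iff_val_lt_val, Fin.coe_castSucc, Fin.val_succ] at hlt1 hlt2
        omega
      -- but M ∪ {t} is a chain
      have hchain : IsChain (· ≤ ·) (insert t M) := by
        apply hM.isChain.insert
        intro b hb _
        obtain ⟨k, rfl⟩ : ∃ k, (e k : L) = b := ⟨e.symm ⟨b, hb⟩, by simp⟩
        rcases le_or_gt k i.castSucc with hki | hki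
        · exact Or.inr ((Subtype.coe_le_coe.2 (e.monotone hki)).trans h1.le)
        · have : i.succ ≤ k := by
            simp only [Fin.lt_iff_val_lt_val, Fin.le_iff_val_le_val, Fin.coe_castSucc,
              Fin.val_succ] at hki ⊢
            omega
          exact Or.inl (h2.le.trans (Subtype.coe_le_coe.2 (e.monotone this)))
      have := hM.2 hchain (Set.subset_insert t M)
      exact htM (this ▸ Set.mem_insert t M)

theorem sup_univ_castSucc' {α} [SemilatticeSup α] [OrderBot α] {n : ℕ} (g : Fin (n + 1) → α) :
    univ.sup g = univ.sup (fun i : Fin n => g i.castSucc) ⊔ g (Fin.last n) := by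
  apply le_antisymm
  · refine Finset.sup_le fun i _ => ?_
    induction i using Fin.lastCases with
    | last => exact le_sup_right
    | cast i =>
      exact le_sup_of_le_left (Finset.le_sup (f := fun i : Fin n => g i.castSucc) (mem_univ i))
  · exact sup_le (Finset.sup_le fun i _ => Finset.le_sup (mem_univ _)) (Finset.le_sup (mem_univ _))

theorem inf_univ_castSucc' {α} [SemilatticeInf α] [OrderTop α] {n : ℕ} (g : Fin (n + 1) → α) :
    univ.inf g = univ.inf (fun i : Fin n => g i.castSucc) ⊓ g (Fin.last n) :=
  sup_univ_castSucc' (α := αᵒᵈ) g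

variable {L : Type*} [Lattice L] [BoundedOrder L]

/-- Normal form lemma: the join of `m k ⊓ f k` equals a meet normal form. -/
theorem nf_lemma : ∀ (n : ℕ) (m f : Fin (n + 1) → L), Monotone m → Antitone f →
    (∀ (k : Fin (n+1)) (x y : L), x ≤ y → x ⊔ (m k ⊓ y) = (x ⊔ m k) ⊓ y) →
    (∀ (j k : Fin (n+1)), j ≤ k → ∀ z : L, m j ⊔ (z ⊓ m k) = (m j ⊔ z) ⊓ m k) →
    univ.sup (fun k => m k ⊓ f k) =
      (f 0 ⊓ univ.inf (fun i : Fin n => m i.castSucc ⊔ f i.succ)) ⊓ m (Fin.last n) := by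
  intro n
  induction n with
  | zero =>
    intro m f _ _ _ _
    have h1 : (univ : Finset (Fin 1)).sup (fun k => m k ⊓ f k) = m 0 ⊓ f 0 := by
      rw [sup_univ_castSucc']
      simp
    have h2 : (univ : Finset (Fin 0)).inf (fun i : Fin 0 => m i.castSucc ⊔ f i.succ) = ⊤ := rfl
    rw [h1, h2]
    simp [inf_comm]
  | succ n IH =>
    intro m f hm hf hL hR
    have key := IH (fun k => m k.castSucc) (fun k => f k.castSucc)
      (fun i j hij => hm (Fin.castSucc_le_castSucc_iff.2 hij))
      (fun i j hij => hf (Fin.castSucc_le_castSucc_iff.2 hij))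
      (fun k x y h => hL k.castSucc x y h)
      (fun j k hjk z => hR j.castSucc k.castSucc (Fin.castSucc_le_castSucc_iff.2 hjk) z)
    -- abbreviations
    set mtop := m (Fin.last (n + 1)) with hmtop
    set msnd := m (Fin.last n).castSucc with hmsnd
    set ftop := f (Fin.last (n + 1)) with hftop
    set P' := univ.inf (fun i : Fin n => m i.castSucc.castSucc ⊔ f i.castSucc.succ) with hP'
    -- rewrite key's inf
    have keyinf : univ.inf (fun i : Fin n => m (i.castSucc : Fin (n+1)).castSucc ⊔ f (i.succ : Fin (n+1)).castSucc) = P' := by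
      rw [hP']
      apply Finset.inf_congr rfl
      intro i _
      rw [← Fin.succ_castSucc]
    have key2 : univ.sup (fun k : Fin (n+1) => m k.castSucc ⊓ f k.castSucc) =
        ((f 0 ⊓ P') ⊓ msnd) := by
      rw [key, keyinf]
      simp only [Fin.castSucc_zero]
    -- split sup on the left
    have hsupsplit : univ.sup (fun k : Fin (n+2) => m k ⊓ f k) =
        univ.sup (fun k : Fin (n+1) => m k.castSucc ⊓ f k.castSucc) ⊔ (mtop ⊓ ftop) := by
      rw [sup_univ_castSucc' (fun k : Fin (n+2) => m k ⊓ f k)]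
    -- split inf on the right
    have hinfsplit : univ.inf (fun i : Fin (n+1) => m i.castSucc ⊔ f i.succ) =
        P' ⊓ (msnd ⊔ ftop) := by
      rw [inf_univ_castSucc' (fun i : Fin (n+1) => m i.castSucc ⊔ f i.succ)]
      simp only [hP', hmsnd, hftop, Fin.succ_last]
    rw [hsupsplit, hinfsplit, key2]
    -- now pure lattice computation
    have hle : msnd ≤ mtop := hm (Fin.le_last _)
    have hRkey : (msnd ⊔ ftop) ⊓ mtop = msnd ⊔ (ftop ⊓ mtop) :=
      (hR (Fin.last n).castSucc (Fin.last (n+1)) (Fin.le_last _) ftop).symm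
    set u := ftop ⊓ mtop with hu
    have huP : u ≤ f 0 ⊓ P' := by
      apply le_inf
      · exact inf_le_left.trans (hf (Fin.zero_le _))
      · refine Finset.le_inf fun i _ => ?_
        exact le_sup_of_le_right (inf_le_left.trans (hf (Fin.le_last _)))
    have hLkey : u ⊔ (msnd ⊓ (f 0 ⊓ P')) = (u ⊔ msnd) ⊓ (f 0 ⊓ P') :=
      hL (Fin.last n).castSucc u (f 0 ⊓ P') huP
    calc (f 0 ⊓ P') ⊓ msnd ⊔ mtop ⊓ ftop
        = (msnd ⊓ (f 0 ⊓ P')) ⊔ u := by rw [hu, inf_comm msnd, inf_comm mtop]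
      _ = u ⊔ (msnd ⊓ (f 0 ⊓ P')) := sup_comm _ _
      _ = (u ⊔ msnd) ⊓ (f 0 ⊓ P') := hLkey
      _ = (f 0 ⊓ P') ⊓ (msnd ⊔ u) := by rw [inf_comm, sup_comm]
      _ = (f 0 ⊓ P') ⊓ ((msnd ⊔ ftop) ⊓ mtop) := by rw [hRkey]
      _ = f 0 ⊓ (P' ⊓ (msnd ⊔ ftop)) ⊓ mtop := by rw [← inf_assoc, ← inf_assoc]


variable {L : Type*} [Lattice L] [BoundedOrder L]

theorem comp_inf_sup {m a b : L} (h : a ≤ b ∨ b ≤ a) :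
    (m ⊓ a) ⊔ (m ⊓ b) = m ⊓ (a ⊔ b) := by
  rcases h with h | h
  · rw [sup_eq_right.2 (inf_le_inf_left m h), sup_eq_right.2 h]
  · rw [sup_eq_left.2 (inf_le_inf_left m h), sup_eq_left.2 h]

theorem comp_sup_inf {m a b : L} (h : a ≤ b ∨ b ≤ a) :
    (m ⊔ a) ⊓ (m ⊔ b) = m ⊔ (a ⊓ b) := by
  rcases h with h | h
  · rw [inf_eq_left.2 (sup_le_sup_left h m), inf_eq_left.2 h]
  · rw [inf_eq_right.2 (sup_le_sup_left h m), inf_eq_right.2 h]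

theorem comp_inf_sup_distrib {a b c : L} (h : b ≤ c ∨ c ≤ b) :
    a ⊓ (b ⊔ c) = (a ⊓ b) ⊔ (a ⊓ c) := by
  rcases h with h | h
  · rw [sup_eq_right.2 h, sup_eq_right.2 (inf_le_inf_left a h)]
  · rw [sup_eq_left.2 h, sup_eq_left.2 (inf_le_inf_left a h)]

section backward

variable {n : ℕ} (m : Fin (n + 1) → L) {C : Set L}

theorem backward_main {M : Set L} (hroof : m (Fin.last n) = ⊤)
    (hmono : Monotone m)
    (hL : ∀ (k : Fin (n+1)) (x y : L), x ≤ y → x ⊔ (m k ⊓ y) = (x ⊔ m k) ⊓ y)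
    (hR : ∀ (j k : Fin (n+1)), j ≤ k → ∀ z : L, m j ⊔ (z ⊓ m k) = (m j ⊔ z) ⊓ m k)
    (hMsub : M ⊆ Set.range m) (hC : IsChain (· ≤ ·) C) :
    ∀ a ∈ latticeClosure (M ∪ C), ∀ b ∈ latticeClosure (M ∪ C),
      ∀ c ∈ latticeClosure (M ∪ C), a ⊓ (b ⊔ c) = (a ⊓ b) ⊔ (a ⊓ c) := by
  classical
  set C' : Set L := C ∪ {⊥, ⊤} with hC'def
  have hC' : IsChain (· ≤ ·) C' := by
    rw [hC'def]
    intro u hu v hv huv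
    rcases hu with hu | hu <;> rcases hv with hv | hv
    · exact hC.total hu hv
    · rcases hv with rfl | rfl
      · exact Or.inr bot_le
      · exact Or.inl le_top
    · rcases hu with rfl | rfl
      · exact Or.inl bot_le
      · exact Or.inr le_top
    · rcases hu with rfl | rfl <;> rcases hv with rfl | rfl
      · exact Or.inl le_rfl
      · exact Or.inl bot_le
      · exact Or.inr bot_le
      · exact Or.inl le_rfl
  have hcomp : ∀ {u v : L}, u ∈ C' → v ∈ C' → u ≤ v ∨ v ≤ u := by
    intro u v hu hv
    by_cases h : u = v
    · exact Or.inl h.le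
    · exact hC'.total hu hv
  -- the candidate sublattice
  set D : Set L := {x | ∃ f : Fin (n + 1) → L, Antitone f ∧ (∀ k, f k ∈ C') ∧
    x = univ.sup fun k => m k ⊓ f k} with hDdef
  -- NF for valid f
  have hnf : ∀ f : Fin (n+1) → L, Antitone f →
      (univ.sup fun k => m k ⊓ f k) =
        f 0 ⊓ univ.inf (fun i : Fin n => m i.castSucc ⊔ f i.succ) := by
    intro f hf
    rw [nf_lemma n m f hmono hf hL hR, hroof, inf_top_eq]
  -- meet of two normal forms
  have hmeet : ∀ f g : Fin (n+1) → L, Antitone f → Antitone g →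
      (∀ k, f k ∈ C') → (∀ k, g k ∈ C') →
      (univ.sup fun k => m k ⊓ f k) ⊓ (univ.sup fun k => m k ⊓ g k) =
        univ.sup fun k => m k ⊓ (f k ⊓ g k) := by
    intro f g hf hg hfC hgC
    have h1 : Antitone (fun k => f k ⊓ g k) := fun i j hij => inf_le_inf (hf hij) (hg hij)
    rw [hnf f hf, hnf g hg, hnf _ h1]
    rw [inf_inf_inf_comm]
    congr 1
    rw [← Finset.inf_inf]
    apply Finset.inf_congr rfl
    intro i _
    show (m i.castSucc ⊔ f i.succ) ⊓ (m i.castSucc ⊔ g i.succ) = m i.castSucc ⊔ (f i.succ ⊓ g i.succ)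
    exact comp_sup_inf (hcomp (hfC i.succ) (hgC i.succ))
  -- join of two normal forms
  have hjoin : ∀ f g : Fin (n+1) → L,
      (∀ k, f k ∈ C') → (∀ k, g k ∈ C') →
      (univ.sup fun k => m k ⊓ f k) ⊔ (univ.sup fun k => m k ⊓ g k) =
        univ.sup fun k => m k ⊓ (f k ⊔ g k) := by
    intro f g hfC hgC
    rw [← Finset.sup_sup]
    apply Finset.sup_congr rfl
    intro k _
    show (m k ⊓ f k) ⊔ (m k ⊓ g k) = m k ⊓ (f k ⊔ g k)
    exact comp_inf_sup (hcomp (hfC k) (hgC k))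
  -- D is a sublattice
  have hDsub : IsSublattice D := by
    constructor
    · rintro x ⟨f, hf, hfC, rfl⟩ y ⟨g, hg, hgC, rfl⟩
      refine ⟨fun k => f k ⊔ g k, fun i j hij => sup_le_sup (hf hij) (hg hij), ?_, ?_⟩
      · intro k
        show f k ⊔ g k ∈ C'
        rcases hcomp (hfC k) (hgC k) with h | h
        · rw [sup_eq_right.2 h]; exact hgC k
        · rw [sup_eq_left.2 h]; exact hfC k
      · show _ = univ.sup fun k => m k ⊓ (f k ⊔ g k)
        exact hjoin f g hfC hgC
    · rintro x ⟨f, hf, hfC, rfl⟩ y ⟨g, hg, hgC, rfl⟩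
      refine ⟨fun k => f k ⊓ g k, fun i j hij => inf_le_inf (hf hij) (hg hij), ?_, ?_⟩
      · intro k
        show f k ⊓ g k ∈ C'
        rcases hcomp (hfC k) (hgC k) with h | h
        · rw [inf_eq_left.2 h]; exact hfC k
        · rw [inf_eq_right.2 h]; exact hgC k
      · show _ = univ.sup fun k => m k ⊓ (f k ⊓ g k)
        exact hmeet f g hf hg hfC hgC
  -- D contains M ∪ C
  have hMCD : M ∪ C ⊆ D := by
    rintro x (hx | hx)
    · obtain ⟨j, rfl⟩ := hMsub hx
      refine ⟨fun k => if k ≤ j then ⊤ else ⊥, ?_, ?_, ?_⟩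
      · intro i k hik
        by_cases h : k ≤ j
        · simp [h, (hik.trans h)]
        · simp [h]
      · intro k
        by_cases h : k ≤ j <;> simp [h, hC'def]
      · apply le_antisymm
        · refine Finset.le_sup_of_le (b := j) (mem_univ j) ?_
          simp
        · refine Finset.sup_le fun k _ => ?_
          by_cases h : k ≤ j
          · simp only [h, if_pos]
            exact inf_le_left.trans (hmono h)
          · simp [h]
    · refine ⟨fun _ => x, antitone_const, fun k => Or.inl hx, ?_⟩
      apply le_antisymm
      · refine Finset.le_sup_of_le (b := Fin.last n) (mem_univ _) ?_
        rw [hroof]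
        simp
      · exact Finset.sup_le fun k _ => inf_le_right
  have hclD : latticeClosure (M ∪ C) ⊆ D := latticeClosure_min hMCD hDsub
  -- final distributivity
  rintro a ha b hb c hc
  obtain ⟨fa, hfa, hfaC, rfl⟩ := hclD ha
  obtain ⟨fb, hfb, hfbC, rfl⟩ := hclD hb
  obtain ⟨fc, hfc, hfcC, rfl⟩ := hclD hc
  have hbc : Antitone fun k => fb k ⊔ fc k := fun i j hij => sup_le_sup (hfb hij) (hfc hij)
  have hbcC : ∀ k, fb k ⊔ fc k ∈ C' := by
    intro k
    rcases hcomp (hfbC k) (hfcC k) with h | h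
    · rw [sup_eq_right.2 h]; exact hfcC k
    · rw [sup_eq_left.2 h]; exact hfbC k
  have hab : Antitone fun k => fa k ⊓ fb k := fun i j hij => inf_le_inf (hfa hij) (hfb hij)
  have hac : Antitone fun k => fa k ⊓ fc k := fun i j hij => inf_le_inf (hfa hij) (hfc hij)
  have habC : ∀ k, fa k ⊓ fb k ∈ C' := by
    intro k
    rcases hcomp (hfaC k) (hfbC k) with h | h
    · rw [inf_eq_left.2 h]; exact hfaC k
    · rw [inf_eq_right.2 h]; exact hfbC k
  have hacC : ∀ k, fa k ⊓ fc k ∈ C' := by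
    intro k
    rcases hcomp (hfaC k) (hfcC k) with h | h
    · rw [inf_eq_left.2 h]; exact hfaC k
    · rw [inf_eq_right.2 h]; exact hfcC k
  rw [hjoin fb fc hfbC hfcC, hmeet fa _ hfa hbc hfaC hbcC,
    hmeet fa fb hfa hfb hfaC hfbC, hmeet fa fc hfa hfc hfaC hfcC,
    hjoin _ _ habC hacC]
  apply Finset.sup_congr rfl
  intro k _
  congr 1
  exact comp_inf_sup_distrib (hcomp (hfbC k) (hfcC k))

end backward

variable {L : Type*} [Lattice L] [Fintype L] [BoundedOrder L]

theorem forward_main {M : Set L} (hM : IsMaxChain (· ≤ ·) M) (hchief : IsChiefChain M) :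
    ∃ ρ : L → ℕ, IsRankFunction ρ ∧ ∀ m₀ ∈ M, IsRankModular ρ m₀ := by
  classical
  obtain ⟨n, m, hsm, hrange, hm0, hmn, hcov⟩ := hM.exists_enum
  have hmM : ∀ i, m i ∈ M := fun i => hrange ▸ Set.mem_range_self i
  set ρ : L → ℕ :=
    fun z => (univ.filter (fun i : Fin n => ¬ (m i.succ ⊓ z ≤ m i.castSucc ⊓ z))).card with hρdef
  refine ⟨ρ, ⟨?_, ?_⟩, ?_⟩
  · -- ρ ⊥ = 0
    rw [hρdef]
    simp
  · -- cover property
    intro x y hxy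
    set cl := latticeClosure (M ∪ {x, y}) with hcl
    have hCchain : IsChain (· ≤ ·) ({x, y} : Set L) := IsChain.pair hxy.le
    have hdist := hchief {x, y} hCchain
    rw [← hcl] at hdist
    have hxcl : x ∈ cl := subset_latticeClosure (Or.inr (by simp))
    have hycl : y ∈ cl := subset_latticeClosure (Or.inr (by simp))
    have hmcl : ∀ i, m i ∈ cl := fun i => subset_latticeClosure (Or.inl (hmM i))
    have hinfcl : InfClosed cl := isSublattice_latticeClosure.infClosed
    -- the set of indices where meet with y jumps over x
    set J := univ.filter (fun i : Fin (n + 1) => ¬ (m i ⊓ y ≤ x)) with hJ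
    have hJne : J.Nonempty := by
      refine ⟨Fin.last n, ?_⟩
      rw [hJ, mem_filter]
      exact ⟨mem_univ _, by rw [hmn, top_inf_eq]; exact hxy.lt.not_ge⟩
    set j := J.min' hJne with hj
    have hjmem : ¬ (m j ⊓ y ≤ x) := (mem_filter.1 (J.min'_mem hJne)).2
    have hjlow : ∀ i : Fin (n + 1), i < j → m i ⊓ y ≤ x := by
      intro i hij
      by_contra hi
      exact absurd (J.min'_le i (mem_filter.2 ⟨mem_univ _, hi⟩)) hij.not_ge
    have hj0 : j ≠ 0 := by
      intro h
      apply hjmem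
      rw [h, hm0, bot_inf_eq]
      exact bot_le
    obtain ⟨j', hj'⟩ := Fin.exists_succ_eq_of_ne_zero hj0
    have hcs_le : (j'.castSucc : Fin (n + 1)) < j := hj' ▸ Fin.castSucc_lt_succ (i := j')
    have hA : ∀ i : Fin (n + 1), i ≤ j'.castSucc → m i ⊓ y = m i ⊓ x := by
      intro i hi
      exact le_antisymm (le_inf inf_le_left (hjlow i (lt_of_le_of_lt hi hcs_le)))
        (inf_le_inf_left _ hxy.le)
    have hB : x ⊔ (m j ⊓ y) = y := by
      have h1 : x ≤ x ⊔ (m j ⊓ y) := le_sup_left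
      have h2 : x ⊔ (m j ⊓ y) ≤ y := sup_le hxy.le inf_le_right
      have h3 : x ≠ x ⊔ (m j ⊓ y) := by
        intro h
        exact hjmem (le_sup_right.trans h.symm.le)
      rcases eq_or_lt_of_le h2 with h | h
      · exact h
      · exact absurd h (hxy.2 (lt_of_le_of_ne h1 h3))
    have hF3 : m j ⊓ x = m j'.castSucc ⊓ x := by
      by_contra hne
      have hge : m j'.castSucc ⊓ x ≤ m j ⊓ x := inf_le_inf_right x (hsm.monotone hcs_le.le)
      have hnle : ¬ (m j ⊓ x ≤ m j'.castSucc) := by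
        intro h
        exact hne (le_antisymm (le_inf h inf_le_right) hge)
      have hsupj : m j'.castSucc ⊔ (m j ⊓ x) = m j := by
        have h1 : m j'.castSucc < m j'.castSucc ⊔ (m j ⊓ x) := by
          rcases eq_or_lt_of_le (le_sup_left : m j'.castSucc ≤ m j'.castSucc ⊔ (m j ⊓ x)) with h | h
          · exact absurd (le_sup_right.trans h.symm.le) hnle
          · exact h
        have h2 : m j'.castSucc ⊔ (m j ⊓ x) ≤ m j :=
          sup_le (hsm.monotone hcs_le.le) inf_le_left
        rcases eq_or_lt_of_le h2 with h | h
        · exact h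
        · rw [← hj'] at h
          exact absurd h ((hcov j').2 (hj' ▸ h1))
      have hd := hdist y hycl (m j'.castSucc) (hmcl _) (m j ⊓ x) (hinfcl (hmcl j) hxcl)
      rw [hsupj] at hd
      apply hjmem
      rw [inf_comm, hd]
      apply sup_le
      · rw [inf_comm, hA j'.castSucc le_rfl]
        exact inf_le_right
      · exact inf_le_right.trans inf_le_right
    have hF4 : ∀ q : Fin (n + 1), j ≤ q → m q ⊓ y = (m q ⊓ x) ⊔ (m j ⊓ y) := by
      intro q hq
      have hd := hdist (m q) (hmcl q) x hxcl (m j ⊓ y) (hinfcl (hmcl j) hycl)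
      rw [hB] at hd
      rw [hd, inf_eq_right.2 (inf_le_left.trans (hsm.monotone hq))]
    -- the two filters
    have hkey : univ.filter (fun i : Fin n => ¬ (m i.succ ⊓ y ≤ m i.castSucc ⊓ y)) =
        insert j' (univ.filter (fun i : Fin n => ¬ (m i.succ ⊓ x ≤ m i.castSucc ⊓ x))) := by
      ext i
      simp only [mem_filter, mem_insert, mem_univ, true_and]
      rcases lt_trichotomy i j' with hij | hij | hij
      · have h1 : (i.succ : Fin (n + 1)) ≤ j'.castSucc := by
          rw [Fin.le_def]
          rw [Fin.lt_def] at hij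
          simpa using hij
        have h2 : (i.castSucc : Fin (n + 1)) ≤ j'.castSucc :=
          (Fin.castSucc_le_castSucc_iff.2 hij.le).trans (by rw [Fin.le_def])
        rw [hA _ h1, hA _ ((Fin.castSucc_lt_succ (i := i)).le.trans h1)]
        constructor
        · exact fun h => Or.inr h
        · rintro (rfl | h)
          · exact absurd rfl hij.ne
          · exact h
      · subst hij
        have hT : ¬ (m i.succ ⊓ y ≤ m i.castSucc ⊓ y) := by
          rw [hA i.castSucc le_rfl, hj']
          intro h
          exact hjmem (h.trans inf_le_right)
        exact iff_of_true hT (Or.inl rfl)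
      · have hq1 : j ≤ i.castSucc := by
          rw [← hj', Fin.le_def]
          rw [Fin.lt_def] at hij
          simpa using hij
        have hq2 : j ≤ i.succ := hq1.trans (Fin.castSucc_lt_succ (i := i)).le
        rw [hF4 _ hq2, hF4 _ hq1]
        have hiff : ((m i.succ ⊓ x) ⊔ (m j ⊓ y) ≤ (m i.castSucc ⊓ x) ⊔ (m j ⊓ y)) ↔
            (m i.succ ⊓ x ≤ m i.castSucc ⊓ x) := by
          constructor
          · intro hle
            have h1 : m i.succ ⊓ x ≤ (m i.castSucc ⊓ x) ⊔ (m j ⊓ y) := le_sup_left.trans hle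
            have hd := hdist (m i.succ ⊓ x) (hinfcl (hmcl _) hxcl)
              (m i.castSucc ⊓ x) (hinfcl (hmcl _) hxcl) (m j ⊓ y) (hinfcl (hmcl _) hycl)
            rw [inf_eq_left.2 h1] at hd
            rw [hd]
            apply sup_le inf_le_right
            have : m i.succ ⊓ x ⊓ (m j ⊓ y) ≤ m j ⊓ x := le_inf
              (inf_le_right.trans inf_le_left) (inf_le_left.trans inf_le_right)
            refine this.trans ?_
            rw [hF3]
            exact inf_le_inf_right x (hsm.monotone (Fin.castSucc_le_castSucc_iff.2 hij.le))
          · exact fun h => sup_le_sup_right h _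
        rw [not_iff_not.2 hiff]
        constructor
        · exact fun h => Or.inr h
        · rintro (rfl | h)
          · exact absurd rfl hij.ne'
          · exact h
    have hnotmem : j' ∉ univ.filter (fun i : Fin n => ¬ (m i.succ ⊓ x ≤ m i.castSucc ⊓ x)) := by
      simp only [mem_filter, mem_univ, true_and, not_not]
      rw [hj', hF3]
    rw [hρdef]
    simp only []
    rw [hkey, card_insert_of_notMem hnotmem]
  · -- rank modularity
    rintro m₀ hm₀ x
    obtain ⟨k, rfl⟩ : ∃ k, m k = m₀ := by
      rw [← hrange] at hm₀
      exact hm₀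
    set cl := latticeClosure (M ∪ {x}) with hcl
    have hCchain : IsChain (· ≤ ·) ({x} : Set L) := Set.subsingleton_singleton.isChain
    have hdist := hchief {x} hCchain
    rw [← hcl] at hdist
    have hxcl : x ∈ cl := subset_latticeClosure (Or.inr rfl)
    have hmcl : ∀ i, m i ∈ cl := fun i => subset_latticeClosure (Or.inl (hmM i))
    have hinfcl : InfClosed cl := isSublattice_latticeClosure.infClosed
    rw [hρdef]
    simp only []
    rw [Finset.card_filter, Finset.card_filter, Finset.card_filter, Finset.card_filter,
      ← Finset.sum_add_distrib, ← Finset.sum_add_distrib]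
    apply Finset.sum_congr rfl
    intro i _
    rcases le_or_gt i.succ k with h | h
    · have hcs : (i.castSucc : Fin (n + 1)) ≤ k := (Fin.castSucc_lt_succ (i := i)).le.trans h
      have e1 : m i.succ ⊓ (m k ⊔ x) = m i.succ := inf_eq_left.2 ((hsm.monotone h).trans le_sup_left)
      have e2 : m i.castSucc ⊓ (m k ⊔ x) = m i.castSucc :=
        inf_eq_left.2 ((hsm.monotone hcs).trans le_sup_left)
      have e3 : m i.succ ⊓ m k = m i.succ := inf_eq_left.2 (hsm.monotone h)
      have e4 : m i.castSucc ⊓ m k = m i.castSucc := inf_eq_left.2 (hsm.monotone hcs)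
      have e5 : m i.succ ⊓ (m k ⊓ x) = m i.succ ⊓ x := by
        rw [← inf_assoc, e3]
      have e6 : m i.castSucc ⊓ (m k ⊓ x) = m i.castSucc ⊓ x := by
        rw [← inf_assoc, e4]
      have htrue : ¬ (m i.succ ≤ m i.castSucc) := (hsm (Fin.castSucc_lt_succ (i := i))).not_ge
      rw [e1, e2, e3, e4, e5, e6]
    · have hk : k ≤ i.castSucc := by
        rw [Fin.le_def]
        rw [Fin.lt_def] at h
        simp only [Fin.val_succ, Fin.coe_castSucc] at h ⊢
        omega
      have hk2 : k ≤ i.succ := hk.trans (Fin.castSucc_lt_succ (i := i)).le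
      have e1 : m i.succ ⊓ m k = m k := inf_eq_right.2 (hsm.monotone hk2)
      have e2 : m i.castSucc ⊓ m k = m k := inf_eq_right.2 (hsm.monotone hk)
      have e3 : m i.succ ⊓ (m k ⊓ x) = m k ⊓ x :=
        inf_eq_right.2 (inf_le_left.trans (hsm.monotone hk2))
      have e4 : m i.castSucc ⊓ (m k ⊓ x) = m k ⊓ x :=
        inf_eq_right.2 (inf_le_left.trans (hsm.monotone hk))
      have e5 : m i.succ ⊓ (m k ⊔ x) = m k ⊔ (m i.succ ⊓ x) := by
        rw [hdist (m i.succ) (hmcl _) (m k) (hmcl _) x hxcl, e1]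
      have e6 : m i.castSucc ⊓ (m k ⊔ x) = m k ⊔ (m i.castSucc ⊓ x) := by
        rw [hdist (m i.castSucc) (hmcl _) (m k) (hmcl _) x hxcl, e2]
      have hiff : (m k ⊔ (m i.succ ⊓ x) ≤ m k ⊔ (m i.castSucc ⊓ x)) ↔
          (m i.succ ⊓ x ≤ m i.castSucc ⊓ x) := by
        constructor
        · intro hle
          have h1 : m i.succ ⊓ x ≤ m k ⊔ (m i.castSucc ⊓ x) := le_sup_right.trans hle
          have hd := hdist (m i.succ ⊓ x) (hinfcl (hmcl _) hxcl) (m k) (hmcl _)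
            (m i.castSucc ⊓ x) (hinfcl (hmcl _) hxcl)
          rw [inf_eq_left.2 h1] at hd
          rw [hd]
          apply sup_le
          · exact le_inf (inf_le_right.trans (hsm.monotone hk)) (inf_le_left.trans inf_le_right)
          · exact inf_le_right
        · exact fun h => sup_le_sup_left h _
      rw [e1, e2, e3, e4, e5, e6]
      by_cases hx : m i.succ ⊓ x ≤ m i.castSucc ⊓ x
      · simp [hx, hiff.2 hx]
      · have h2 : ¬ (m k ⊔ (m i.succ ⊓ x) ≤ m k ⊔ (m i.castSucc ⊓ x)) := fun hh => hx (hiff.1 hh)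
        simp [hx, h2]

end ChiefChainProof

/-- A maximal chain `M` of a finite lattice `L` is a chief chain if and only if `L` is
graded with some rank function `ρ` and every element of `M` is rank modular w.r.t. `ρ`. -/
theorem chiefChain_iff_rankModular {L : Type*} [Lattice L] [Fintype L] [BoundedOrder L]
    (M : Set L) (hM : IsMaxChain (· ≤ ·) M) :
    IsChiefChain M ↔ ∃ ρ : L → ℕ, IsRankFunction ρ ∧ ∀ m ∈ M, IsRankModular ρ m := by
  constructor
  · exact fun h => forward_main hM h
  · rintro ⟨ρ, hρ, hmod⟩
    intro C hC
    obtain ⟨n, m, hsm, hrange, hm0, hmn, hcov⟩ := hM.exists_enum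
    have hmM : ∀ i, m i ∈ M := fun i => hrange ▸ Set.mem_range_self i
    exact backward_main m hmn hsm.monotone
      (fun k x y hxy => (hmod (m k) (hmM k)).leftMod hρ hxy)
      (fun j k hjk z => (hmod (m j) (hmM j)).pairMod hρ (hmod (m k) (hmM k)) (hsm.monotone hjk) z)
      (le_of_eq hrange.symm) hC
end

section
/- (McNamara–Thomas) Let L be a finite lattice and let M be a maximal chain of L. Then M is a chief chain if and only if L is graded (i.e., admits a rank function ρ : L → ℕ with ρ(⊥) = 0 and ρ(y) = ρ(x) + 1 whenever y covers x) and every element of M is left-modular. -/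
open Finset
open scoped Classical
set_option linter.unusedSectionVars false

namespace McNamaraThomasAux
section Enum

variable {L : Type*} [Lattice L] [Fintype L] [BoundedOrder L]

lemma exists_chain_enum {M : Set L} (hM : IsMaxChain (· ≤ ·) M) :
    ∃ (n : ℕ) (m : Fin (n + 1) → L), StrictMono m ∧ m 0 = ⊥ ∧ m (Fin.last n) = ⊤ ∧
      Set.range m = M ∧ ∀ i : Fin n, m i.castSucc ⋖ m i.succ := by
  haveI : Fintype ↥M := (Set.toFinite M).fintype
  letI : LinearOrder ↥M :=
    { (inferInstance : PartialOrder ↥M) with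
      le_total := fun a b => hM.isChain.total a.2 b.2
      toDecidableLE := fun _ _ => Classical.propDecidable _ }
  haveI : Nonempty ↥M := ⟨⟨⊥, hM.bot_mem⟩⟩
  obtain ⟨n, hn⟩ : ∃ n, Fintype.card ↥M = n + 1 :=
    Nat.exists_eq_succ_of_ne_zero Fintype.card_ne_zero
  set e := monoEquivOfFin ↥M hn with he
  set m : Fin (n + 1) → L := fun i => (e i : L) with hm
  have hsm : StrictMono m := fun a b hab => Subtype.coe_lt_coe.2 (e.strictMono hab)
  have hrange : Set.range m = M := by
    ext x
    constructor
    · rintro ⟨i, rfl⟩; exact (e i).2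
    · intro hx; exact ⟨e.symm ⟨x, hx⟩, by simp [hm]⟩
  have hbot : m 0 = ⊥ := by
    have h2 : m (e.symm ⟨⊥, hM.bot_mem⟩) = ⊥ := by simp [hm]
    refine le_antisymm ?_ bot_le
    rw [← h2]
    exact hsm.monotone (Fin.zero_le _)
  have htop : m (Fin.last n) = ⊤ := by
    have h2 : m (e.symm ⟨⊤, hM.top_mem⟩) = ⊤ := by simp [hm]
    refine le_antisymm le_top ?_
    rw [← h2]
    exact hsm.monotone (Fin.le_last _)
  refine ⟨n, m, hsm, hbot, htop, hrange, fun i => ?_⟩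
  refine ⟨hsm (Fin.castSucc_lt_succ (i := i)), fun u h1 h2 => ?_⟩
  by_cases hu : u ∈ M
  · rw [← hrange] at hu
    obtain ⟨j, rfl⟩ := hu
    have hj1 : i.castSucc < j := hsm.lt_iff_lt.1 h1
    have hj2 : j < i.succ := hsm.lt_iff_lt.1 h2
    rw [Fin.lt_def] at hj1 hj2
    simp only [Fin.coe_castSucc, Fin.val_succ] at hj1 hj2
    omega
  · have hchain : IsChain (· ≤ ·) (insert u M) := by
      refine hM.isChain.insert fun b hb _ => ?_
      rw [← hrange] at hb
      obtain ⟨j, rfl⟩ := hb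
      rcases le_or_gt j i.castSucc with hj | hj
      · exact Or.inr ((hsm.monotone hj).trans h1.le)
      · have hj' : i.succ ≤ j := by
          rw [Fin.le_def]; rw [Fin.lt_def] at hj
          simp only [Fin.coe_castSucc, Fin.val_succ] at hj ⊢
          omega
        exact Or.inl (h2.le.trans (hsm.monotone hj'))
    have := hM.2 hchain (Set.subset_insert u M)
    exact hu (this ▸ Set.mem_insert u M)

end Enum

section Phi

variable {L : Type*} [Lattice L] {n : ℕ}

/-- Indices below `k`. -/
noncomputable def below {n : ℕ} (k : Fin (n + 1)) : Finset (Fin n) :=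
  univ.filter fun i => (i : ℕ) < (k : ℕ)

/-- The set of indices at which the chain `m i ⊓ x` takes a strict step. -/
noncomputable def phi (m : Fin (n + 1) → L) (x : L) : Finset (Fin n) :=
  univ.filter fun i => m i.castSucc ⊓ x < m i.succ ⊓ x

/-- The set of indices at which the chain `m i ⊔ x` takes a strict step. -/
noncomputable def psi (m : Fin (n + 1) → L) (x : L) : Finset (Fin n) :=
  univ.filter fun i => m i.castSucc ⊔ x < m i.succ ⊔ x

variable {m : Fin (n + 1) → L}

lemma mem_below {k : Fin (n + 1)} {i : Fin n} : i ∈ below k ↔ (i : ℕ) < (k : ℕ) := by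
  simp [below]

lemma mem_phi {x : L} {i : Fin n} : i ∈ phi m x ↔ m i.castSucc ⊓ x < m i.succ ⊓ x := by
  simp [phi]

lemma mem_psi {x : L} {i : Fin n} : i ∈ psi m x ↔ m i.castSucc ⊔ x < m i.succ ⊔ x := by
  simp [psi]

lemma not_mem_phi (hmono : StrictMono m) {x : L} {i : Fin n} (h : i ∉ phi m x) :
    m i.castSucc ⊓ x = m i.succ ⊓ x := by
  rw [mem_phi] at h
  have hle : m i.castSucc ⊓ x ≤ m i.succ ⊓ x :=
    inf_le_inf_right x (hmono.monotone (Fin.castSucc_le_succ i))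
  by_contra hne
  exact h (hle.lt_of_ne hne)

lemma phi_mono (hmono : StrictMono m) {x y : L} (hxy : x ≤ y) : phi m x ⊆ phi m y := by
  intro i hi
  rw [mem_phi] at hi ⊢
  refine lt_of_le_of_ne (inf_le_inf_right y (hmono.monotone (Fin.castSucc_le_succ i))) ?_
  intro heq
  have : m i.succ ⊓ x ≤ m i.castSucc ⊓ x := by
    have h1 : m i.succ ⊓ x ≤ m i.castSucc := by
      calc m i.succ ⊓ x ≤ m i.succ ⊓ y := inf_le_inf_left _ hxy
        _ = m i.castSucc ⊓ y := heq.symm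
        _ ≤ m i.castSucc := inf_le_left
    exact le_inf h1 inf_le_right
  exact this.not_gt hi

lemma phi_bot [OrderBot L] : phi m (⊥ : L) = ∅ := by
  ext i
  simp [mem_phi]

end Phi


section Steps

variable {L : Type*} [Lattice L] {n : ℕ} {m : Fin (n + 1) → L}

/-- Each step of the chain `i ↦ m i ⊓ x` is an equality or a cover. -/
lemma meet_step (hcov : ∀ i : Fin n, m i.castSucc ⋖ m i.succ)
    (hlm : ∀ k, IsLeftModular (m k)) (i : Fin n) (x : L) :
    m i.castSucc ⊓ x = m i.succ ⊓ x ∨ (m i.castSucc ⊓ x) ⋖ (m i.succ ⊓ x) := by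
  have hle : m i.castSucc ⊓ x ≤ m i.succ ⊓ x :=
    inf_le_inf_right x ((hcov i).lt.le)
  rcases eq_or_lt_of_le hle with h | h
  · exact Or.inl h
  refine Or.inr ⟨h, fun u h1 h2 => ?_⟩
  have hu : u = (u ⊔ m i.castSucc) ⊓ (m i.succ ⊓ x) := by
    have hlmu := hlm i.castSucc u (m i.succ ⊓ x) h2
    rw [← hlmu]
    have : m i.castSucc ⊓ (m i.succ ⊓ x) = m i.castSucc ⊓ x := by
      rw [← inf_assoc, inf_eq_left.2 (hcov i).lt.le]
    rw [this, sup_eq_left.2 h1.le]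
  have hmem : u ⊔ m i.castSucc = m i.castSucc ∨ u ⊔ m i.castSucc = m i.succ :=
    (hcov i).wcovBy.eq_or_eq le_sup_right (sup_le (h2.le.trans inf_le_left) (hcov i).lt.le)
  rcases hmem with hh | hh
  · rw [hh] at hu
    have : u ≤ m i.castSucc ⊓ x := le_inf (by rw [hu]; exact inf_le_left)
      (le_trans h2.le inf_le_right)
    exact absurd h1 (this.not_gt)
  · rw [hh, ← inf_assoc, inf_idem] at hu
    exact absurd h2 (by rw [hu]; exact lt_irrefl _)

/-- Each step of the chain `i ↦ m i ⊔ x` is an equality or a cover. -/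
lemma join_step (hcov : ∀ i : Fin n, m i.castSucc ⋖ m i.succ)
    (hlm : ∀ k, IsLeftModular (m k)) (i : Fin n) (x : L) :
    m i.castSucc ⊔ x = m i.succ ⊔ x ∨ (m i.castSucc ⊔ x) ⋖ (m i.succ ⊔ x) := by
  have hle : m i.castSucc ⊔ x ≤ m i.succ ⊔ x :=
    sup_le_sup_right ((hcov i).lt.le) x
  rcases eq_or_lt_of_le hle with h | h
  · exact Or.inl h
  refine Or.inr ⟨h, fun u h1 h2 => ?_⟩
  have hu : u = (m i.castSucc ⊔ x) ⊔ (m i.succ ⊓ u) := by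
    have hlmu := hlm i.succ (m i.castSucc ⊔ x) u h1
    rw [hlmu]
    have : (m i.castSucc ⊔ x) ⊔ m i.succ = m i.succ ⊔ x := by
      rw [sup_comm (m i.castSucc) x, sup_assoc, sup_eq_right.2 (hcov i).lt.le, sup_comm]
    rw [this, inf_eq_right.2 h2.le]
  have hmem : m i.succ ⊓ u = m i.castSucc ∨ m i.succ ⊓ u = m i.succ :=
    (hcov i).wcovBy.eq_or_eq (le_inf (hcov i).lt.le (le_trans le_sup_left h1.le)) inf_le_left
  rcases hmem with hh | hh
  · rw [hh, sup_eq_left.2 le_sup_left] at hu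
    exact absurd h1 (hu ▸ lt_irrefl u)
  · rw [hh] at hu
    have h4 : (m i.castSucc ⊔ x) ⊔ m i.succ = m i.succ ⊔ x := by
      rw [sup_comm (m i.castSucc) x, sup_assoc, sup_eq_right.2 (hcov i).lt.le,
        sup_comm x (m i.succ)]
    rw [h4] at hu
    exact absurd h2 (by rw [hu]; exact lt_irrefl _)

/-- A strict meet-step forces an equal join-step. -/
lemma strict_meet_join_eq (hcov : ∀ i : Fin n, m i.castSucc ⋖ m i.succ)
    {i : Fin n} {x : L} (hi : i ∈ phi m x) : m i.castSucc ⊔ x = m i.succ ⊔ x := by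
  rw [mem_phi] at hi
  have hnle : ¬ m i.succ ⊓ x ≤ m i.castSucc := by
    intro hle
    have : m i.succ ⊓ x ≤ m i.castSucc ⊓ x := le_inf hle inf_le_right
    exact this.not_gt hi
  have h1 : m i.castSucc < m i.castSucc ⊔ (m i.succ ⊓ x) :=
    left_lt_sup.2 fun hle => hnle hle
  have h2 : m i.castSucc ⊔ (m i.succ ⊓ x) ≤ m i.succ := sup_le (hcov i).lt.le inf_le_left
  have h3 : m i.castSucc ⊔ (m i.succ ⊓ x) = m i.succ := by
    rcases (hcov i).wcovBy.eq_or_eq le_sup_left h2 with hh | hh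
    · rw [hh] at h1; exact absurd h1 (lt_irrefl _)
    · exact hh
  refine le_antisymm (sup_le_sup_right (hcov i).lt.le x) ?_
  refine sup_le ?_ le_sup_right
  rw [← h3]
  exact sup_le (le_sup_left) (inf_le_right.trans le_sup_right)

lemma psi_disjoint_phi (hcov : ∀ i : Fin n, m i.castSucc ⋖ m i.succ) (x : L) :
    ∀ i ∈ psi m x, i ∉ phi m x := by
  intro i hi hphi
  rw [mem_psi] at hi
  exact absurd (strict_meet_join_eq hcov hphi) hi.ne

end Steps


section Rank

variable {L : Type*} [Lattice L] [Fintype L] [BoundedOrder L] {n : ℕ} {m : Fin (n + 1) → L}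

lemma card_inter_below_succ (s : Finset (Fin n)) (i : Fin n) :
    (s ∩ below i.succ).card = (s ∩ below i.castSucc).card + (if i ∈ s then 1 else 0) := by
  have hsplit : s ∩ below i.succ =
      (s ∩ below i.castSucc) ∪ (if i ∈ s then {i} else ∅) := by
    ext j
    by_cases his : i ∈ s <;>
      simp only [his, if_true, if_false, Finset.mem_union, Finset.mem_inter, mem_below,
        Finset.mem_singleton, Finset.notMem_empty, or_false, Fin.val_succ, Fin.coe_castSucc] <;>
      constructor
    · rintro ⟨hjs, hj⟩
      rcases Nat.lt_succ_iff_lt_or_eq.1 hj with h | h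
      · exact Or.inl ⟨hjs, h⟩
      · exact Or.inr (Fin.ext h)
    · rintro (⟨hjs, hj⟩ | rfl)
      · exact ⟨hjs, by omega⟩
      · exact ⟨his, by omega⟩
    · rintro ⟨hjs, hj⟩
      rcases Nat.lt_succ_iff_lt_or_eq.1 hj with h | h
      · exact ⟨hjs, h⟩
      · exact absurd (Fin.ext h ▸ hjs) his
    · rintro ⟨hjs, hj⟩
      exact ⟨hjs, by omega⟩
  rw [hsplit, Finset.card_union_of_disjoint]
  · congr 1
    by_cases his : i ∈ s <;> simp [his]
  · by_cases his : i ∈ s <;>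
      simp [his, Finset.disjoint_singleton_right, mem_below]

variable (hmono : StrictMono m) (hbot : m 0 = ⊥) (htop : m (Fin.last n) = ⊤)
  (hcov : ∀ i : Fin n, m i.castSucc ⋖ m i.succ) (hlm : ∀ k, IsLeftModular (m k))
  {ρ : L → ℕ} (hρ0 : ρ ⊥ = 0) (hρ : ∀ x y : L, x ⋖ y → ρ y = ρ x + 1)

include hbot hcov hlm hρ0 hρ in
lemma rank_inf (k : Fin (n + 1)) (x : L) : ρ (m k ⊓ x) = (phi m x ∩ below k).card := by
  induction k using Fin.induction with
  | zero =>
    rw [hbot, bot_inf_eq, hρ0]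
    have : phi m x ∩ below (0 : Fin (n + 1)) = ∅ := by
      ext j; simp [mem_below]
    rw [this, Finset.card_empty]
  | succ i ih =>
    rw [card_inter_below_succ]
    by_cases hi : i ∈ phi m x
    · rcases meet_step hcov hlm i x with h | h
      · rw [mem_phi] at hi; exact absurd h hi.ne
      · rw [hρ _ _ h, ih, if_pos hi]
    · rcases meet_step hcov hlm i x with h | h
      · rw [← h, ih, if_neg hi, Nat.add_zero]
      · rw [mem_phi] at hi; exact absurd h.lt hi

include hbot htop hcov hlm hρ0 hρ in
lemma rank_eq_card_phi (x : L) : ρ x = (phi m x).card := by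
  have h := rank_inf hbot hcov hlm hρ0 hρ (m := m) (Fin.last n) x
  rw [htop, top_inf_eq] at h
  rw [h]
  congr 1
  refine Finset.inter_eq_left.2 fun i _ => ?_
  rw [mem_below]
  exact i.isLt

include hbot hcov hlm hρ0 hρ in
lemma rank_sup (k : Fin (n + 1)) (x : L) :
    ρ (m k ⊔ x) = ρ x + (psi m x ∩ below k).card := by
  induction k using Fin.induction with
  | zero =>
    rw [hbot, bot_sup_eq]
    have : psi m x ∩ below (0 : Fin (n + 1)) = ∅ := by
      ext j; simp [mem_below]
    rw [this, Finset.card_empty, Nat.add_zero]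
  | succ i ih =>
    rw [card_inter_below_succ]
    by_cases hi : i ∈ psi m x
    · rcases join_step hcov hlm i x with h | h
      · rw [mem_psi] at hi; exact absurd h hi.ne
      · rw [hρ _ _ h, ih, if_pos hi, Nat.add_assoc]
    · rcases join_step hcov hlm i x with h | h
      · rw [← h, ih, if_neg hi, Nat.add_zero]
      · rw [mem_psi] at hi; exact absurd h.lt hi

include hρ in
lemma rank_strictMono : StrictMono ρ := by
  intro x y hxy
  induction x using WellFounded.induction (wellFounded_gt (α := L)) generalizing y with
  | _ x IH =>
    obtain ⟨z, hz, hzy⟩ := hxy.exists_covby_le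
    have h1 : ρ x < ρ z := by rw [hρ _ _ hz]; omega
    rcases eq_or_lt_of_le hzy with rfl | hlt
    · exact h1
    · exact h1.trans (IH z hz.lt hlt)

include hmono hbot htop hcov hlm hρ0 hρ in
lemma phi_reflect {x y : L} (hxy : x ≤ y) (hphi : phi m x = phi m y) : x = y := by
  rcases eq_or_lt_of_le hxy with h | h
  · exact h
  exfalso
  have h1 := rank_eq_card_phi hbot htop hcov hlm hρ0 hρ (m := m) x
  have h2 := rank_eq_card_phi hbot htop hcov hlm hρ0 hρ (m := m) y
  have := rank_strictMono hρ h
  rw [h1, hphi, ← h2] at this; exact lt_irrefl _ this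

end Rank


section PhiFormulas

variable {L : Type*} [Lattice L] [Fintype L] [BoundedOrder L] {n : ℕ} {m : Fin (n + 1) → L}

variable (hmono : StrictMono m) (hbot : m 0 = ⊥) (htop : m (Fin.last n) = ⊤)
  (hcov : ∀ i : Fin n, m i.castSucc ⋖ m i.succ) (hlm : ∀ k, IsLeftModular (m k))
  {ρ : L → ℕ} (hρ0 : ρ ⊥ = 0) (hρ : ∀ x y : L, x ⋖ y → ρ y = ρ x + 1)

include hmono in
lemma phi_m_inf (k : Fin (n + 1)) (x : L) : phi m (m k ⊓ x) = phi m x ∩ below k := by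
  ext i
  simp only [mem_phi, Finset.mem_inter, mem_below]
  by_cases hik : (i : ℕ) < (k : ℕ)
  · have h1 : m i.castSucc ⊓ m k = m i.castSucc :=
      inf_eq_left.2 (hmono.monotone (by rw [Fin.le_def]; simp; omega))
    have h2 : m i.succ ⊓ m k = m i.succ :=
      inf_eq_left.2 (hmono.monotone (by rw [Fin.le_def]; simp [Fin.val_succ]; omega))
    rw [← inf_assoc, h1, ← inf_assoc, h2]
    exact ⟨fun h => ⟨h, hik⟩, fun h => h.1⟩
  · have h1 : m i.castSucc ⊓ m k = m k :=
      inf_eq_right.2 (hmono.monotone (by rw [Fin.le_def]; simp; omega))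
    have h2 : m i.succ ⊓ m k = m k :=
      inf_eq_right.2 (hmono.monotone (by rw [Fin.le_def]; simp [Fin.val_succ]; omega))
    rw [← inf_assoc, h1, ← inf_assoc, h2]
    simp only [lt_irrefl, false_iff, not_and]
    intro _
    exact hik

include hmono hbot htop hcov hlm hρ0 hρ in
lemma phi_m_sup (k : Fin (n + 1)) (x : L) : phi m (m k ⊔ x) = phi m x ∪ below k := by
  have hsub : phi m x ∪ below k ⊆ phi m (m k ⊔ x) := by
    intro i hi
    rcases Finset.mem_union.1 hi with hi | hi
    · exact phi_mono hmono le_sup_right hi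
    · rw [mem_below] at hi
      rw [mem_phi]
      have h1 : m i.castSucc ⊓ (m k ⊔ x) = m i.castSucc :=
        inf_eq_left.2 (le_trans (hmono.monotone (by rw [Fin.le_def]; simp; omega)) le_sup_left)
      have h2 : m i.succ ⊓ (m k ⊔ x) = m i.succ :=
        inf_eq_left.2 (le_trans (hmono.monotone
          (by rw [Fin.le_def]; simp [Fin.val_succ]; omega)) le_sup_left)
      rw [h1, h2]
      exact hmono (Fin.castSucc_lt_succ (i := i))
  have hcard : (phi m (m k ⊔ x)).card ≤ (phi m x ∪ below k).card := by
    have e1 : (phi m (m k ⊔ x)).card = ρ (m k ⊔ x) :=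
      (rank_eq_card_phi hbot htop hcov hlm hρ0 hρ _).symm
    have e2 : ρ (m k ⊔ x) = ρ x + (psi m x ∩ below k).card :=
      rank_sup hbot hcov hlm hρ0 hρ k x
    have e3 : ρ x = (phi m x).card := rank_eq_card_phi hbot htop hcov hlm hρ0 hρ _
    have e4 : (psi m x ∩ below k).card ≤ (below k \ phi m x).card := by
      refine Finset.card_le_card fun i hi => ?_
      rw [Finset.mem_inter] at hi
      rw [Finset.mem_sdiff]
      exact ⟨hi.2, psi_disjoint_phi hcov x i hi.1⟩
    have e5 : (phi m x).card + (below k \ phi m x).card = (phi m x ∪ below k).card := by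
      rw [Finset.union_comm, ← Finset.card_sdiff_add_card]
      omega
    omega
  exact (Finset.eq_of_subset_of_card_le hsub hcard).symm

include hmono hbot htop hcov hlm hρ0 hρ in
lemma claimB (p : Fin (n + 1)) {x c : L} (hxc : x ≤ c) :
    phi m (x ⊔ (m p ⊓ c)) = phi m x ∪ (below p ∩ phi m c) := by
  rcases eq_or_lt_of_le hxc with rfl | hlt
  · rw [sup_eq_left.2 inf_le_right]
    rw [Finset.union_eq_left.2 Finset.inter_subset_right]
  · have key : x ⊔ (m p ⊓ c) = (x ⊔ m p) ⊓ c := hlm p x c hlt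
    refine subset_antisymm ?_ ?_
    · rw [key]
      intro i hi
      have h1 : i ∈ phi m (x ⊔ m p) := phi_mono hmono inf_le_left hi
      have h2 : i ∈ phi m c := phi_mono hmono inf_le_right hi
      rw [sup_comm x (m p), phi_m_sup hmono hbot htop hcov hlm hρ0 hρ] at h1
      rcases Finset.mem_union.1 h1 with h | h
      · exact Finset.mem_union_left _ h
      · exact Finset.mem_union_right _ (Finset.mem_inter.2 ⟨h, h2⟩)
    · refine Finset.union_subset (phi_mono hmono le_sup_left) ?_
      have : below p ∩ phi m c = phi m (m p ⊓ c) := by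
        rw [phi_m_inf hmono, Finset.inter_comm]
      rw [this]
      exact phi_mono hmono le_sup_right

end PhiFormulas


section Chief

variable {L : Type*} [Lattice L] [Fintype L] [BoundedOrder L]

set_option maxHeartbeats 1000000 in
lemma isChiefChain_of {M : Set L} (hM : IsMaxChain (· ≤ ·) M) (ρ : L → ℕ)
    (hρ0 : ρ ⊥ = 0) (hρ : ∀ x y : L, x ⋖ y → ρ y = ρ x + 1)
    (hlmM : ∀ m' ∈ M, IsLeftModular m') :
    ∀ C : Set L, IsChain (· ≤ ·) C →
      ∀ a ∈ latticeClosure (M ∪ C), ∀ b ∈ latticeClosure (M ∪ C),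
        ∀ d ∈ latticeClosure (M ∪ C), a ⊓ (b ⊔ d) = (a ⊓ b) ⊔ (a ⊓ d) := by
  obtain ⟨n, m, hmono, hbot, htop, hrange, hcov⟩ := exists_chain_enum hM
  have hlm : ∀ k, IsLeftModular (m k) := fun k => hlmM _ (hrange ▸ Set.mem_range_self k)
  intro C hC
  -- enumerate C ∪ {⊤} monotonically
  set Cf : Set L := insert ⊤ C with hCfdef
  have hCfchain : IsChain (· ≤ ·) Cf := hC.insert fun b _ _ => Or.inr le_top
  haveI : Fintype ↥Cf := (Set.toFinite Cf).fintype
  letI : LinearOrder ↥Cf :=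
    { (inferInstance : PartialOrder ↥Cf) with
      le_total := fun a b => hCfchain.total a.2 b.2
      toDecidableLE := fun _ _ => Classical.propDecidable _ }
  haveI : Nonempty ↥Cf := ⟨⟨⊤, Set.mem_insert _ _⟩⟩
  obtain ⟨r, hr⟩ : ∃ r, Fintype.card ↥Cf = r + 1 :=
    Nat.exists_eq_succ_of_ne_zero Fintype.card_ne_zero
  set e := monoEquivOfFin ↥Cf hr with he
  set c : Fin (r + 1) → L := fun j => (e j : L) with hcdef
  have cmono : Monotone c := fun a b hab => Subtype.coe_le_coe.2 (e.monotone hab)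
  have csurj : ∀ y ∈ Cf, ∃ j, c j = y := fun y hy => ⟨e.symm ⟨y, hy⟩, by simp [hcdef]⟩
  have ctop : c (Fin.last r) = ⊤ := by
    obtain ⟨j, hj⟩ := csurj ⊤ (Set.mem_insert _ _)
    exact le_antisymm le_top (hj ▸ cmono (Fin.le_last j))
  -- the canonical elements
  set hh : (Fin (r + 1) → Fin (n + 1)) → L :=
    fun k => univ.sup fun j => m (k j) ⊓ c j with hhdef
  have m_inf_sup : ∀ (p q : Fin (n + 1)) (z : L),
      m (p ⊔ q) ⊓ z = (m p ⊓ z) ⊔ (m q ⊓ z) := by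
    intro p q z
    rcases le_total p q with h | h
    · rw [sup_eq_right.2 h, sup_eq_right.2 (inf_le_inf_right z (hmono.monotone h))]
    · rw [sup_eq_left.2 h, sup_eq_left.2 (inf_le_inf_right z (hmono.monotone h))]
  have hh_sup : ∀ k k', hh (k ⊔ k') = hh k ⊔ hh k' := by
    intro k k'
    rw [hhdef]
    dsimp only
    rw [← Finset.sup_sup]
    congr 1
    funext j
    show m ((k ⊔ k') j) ⊓ c j = (m (k j) ⊓ c j) ⊔ (m (k' j) ⊓ c j)
    exact m_inf_sup (k j) (k' j) (c j)
  have hh_mono : ∀ {k k' : Fin (r + 1) → Fin (n + 1)}, k ≤ k' → hh k ≤ hh k' := by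
    intro k k' hkk
    exact Finset.sup_mono_fun fun j _ => inf_le_inf_right _ (hmono.monotone (hkk j))
  -- the phi formula for canonical elements
  set FF : (Fin (r + 1) → Fin (n + 1)) → Finset (Fin n) :=
    fun k => univ.biUnion fun j => below (k j) ∩ phi m (c j) with hFFdef
  have phi_hh : ∀ k, phi m (hh k) = FF k := by
    intro k
    have key : ∀ j : Fin (r + 1),
        phi m ((univ.filter (· ≤ j)).sup fun j' => m (k j') ⊓ c j')
          = (univ.filter (· ≤ j)).biUnion fun j' => below (k j') ∩ phi m (c j') := by
      intro j
      induction j using Fin.induction with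
      | zero =>
        have h0 : (univ.filter (· ≤ (0 : Fin (r + 1)))) = {0} := by
          ext a; simp [Fin.le_zero_iff]
        rw [h0, Finset.sup_singleton, Finset.singleton_biUnion, phi_m_inf hmono,
          Finset.inter_comm]
      | succ i ih =>
        have hstep : (univ.filter (· ≤ i.succ))
            = insert i.succ (univ.filter (· ≤ i.castSucc)) := by
          ext a
          simp only [Finset.mem_filter, Finset.mem_univ, true_and, Finset.mem_insert]
          rw [Fin.le_def, Fin.le_def]
          simp only [Fin.val_succ, Fin.coe_castSucc]
          constructor
          · intro h
            by_cases h' : (a : ℕ) = (i : ℕ) + 1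
            · exact Or.inl (Fin.ext (by simpa using h'))
            · exact Or.inr (by omega)
          · rintro (rfl | h)
            · simp
            · omega
        have hne : i.succ ∉ univ.filter (· ≤ i.castSucc) := by
          simp only [Finset.mem_filter, Finset.mem_univ, true_and, Fin.le_def,
            Fin.val_succ, Fin.coe_castSucc]
          omega
        have hxle : ((univ.filter (· ≤ i.castSucc)).sup fun j' => m (k j') ⊓ c j')
            ≤ c i.succ := by
          refine Finset.sup_le fun j' hj' => ?_
          refine le_trans inf_le_right (cmono ?_)
          have h5 := (Finset.mem_filter.1 hj').2
          exact le_trans h5 (Fin.castSucc_le_succ i)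
        rw [hstep, Finset.sup_insert, Finset.biUnion_insert]
        rw [sup_comm (m (k i.succ) ⊓ c i.succ),
          claimB hmono hbot htop hcov hlm hρ0 hρ (k i.succ) hxle, ih,
          Finset.union_comm]
    have huniv : (univ.filter (· ≤ Fin.last r)) = univ := by
      ext a; simp [Fin.le_last]
    have h6 := key (Fin.last r)
    rw [huniv] at h6
    exact h6
  -- intersections of the index formulas
  have FF_core : ∀ (k k' : Fin (r + 1) → Fin (n + 1)), Antitone k' →
      ∀ (i : Fin n) (j j' : Fin (r + 1)), j ≤ j' →
        i ∈ below (k j) ∩ phi m (c j) → i ∈ below (k' j') ∩ phi m (c j') →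
          i ∈ FF (k ⊓ k') := by
    intro k k' hk' i j j' hjj h1 h2
    rw [Finset.mem_inter, mem_below] at h1 h2
    refine Finset.mem_biUnion.2 ⟨j, Finset.mem_univ _, Finset.mem_inter.2 ⟨?_, h1.2⟩⟩
    rw [mem_below]
    have h7 : k' j' ≤ k' j := hk' hjj
    rw [Fin.le_def] at h7
    have happ : (k ⊓ k') j = k j ⊓ k' j := rfl
    rw [happ]
    rcases le_total (k j) (k' j) with h | h
    · rw [inf_eq_left.2 h]; exact h1.1
    · rw [inf_eq_right.2 h]; omega
  have FF_inter : ∀ (k k' : Fin (r + 1) → Fin (n + 1)), Antitone k → Antitone k' →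
      FF k ∩ FF k' ⊆ FF (k ⊓ k') := by
    intro k k' hk hk' i hi
    rw [Finset.mem_inter] at hi
    obtain ⟨j, _, h1⟩ := Finset.mem_biUnion.1 hi.1
    obtain ⟨j', _, h2⟩ := Finset.mem_biUnion.1 hi.2
    rcases le_total j j' with h | h
    · exact FF_core k k' hk' i j j' h h1 h2
    · have h8 := FF_core k' k hk i j' j h h2 h1
      rwa [inf_comm k' k] at h8
  -- the meet formula
  have hh_inf : ∀ {k k' : Fin (r + 1) → Fin (n + 1)}, Antitone k → Antitone k' →
      hh k ⊓ hh k' = hh (k ⊓ k') := by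
    intro k k' hk hk'
    have hle : hh (k ⊓ k') ≤ hh k ⊓ hh k' :=
      le_inf (hh_mono inf_le_left) (hh_mono inf_le_right)
    refine (phi_reflect hmono hbot htop hcov hlm hρ0 hρ hle ?_).symm
    refine subset_antisymm (phi_mono hmono hle) ?_
    calc phi m (hh k ⊓ hh k') ⊆ phi m (hh k) ∩ phi m (hh k') :=
        Finset.subset_inter (phi_mono hmono inf_le_left) (phi_mono hmono inf_le_right)
      _ ⊆ FF (k ⊓ k') := by rw [phi_hh, phi_hh]; exact FF_inter k k' hk hk'
      _ = phi m (hh (k ⊓ k')) := (phi_hh _).symm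
  -- the sublattice of canonical elements
  set T : Set L := {a | ∃ k, Antitone k ∧ hh k = a} with hTdef
  have hTsub : IsSublattice T := by
    constructor
    · rintro a ⟨k, hk, rfl⟩ b ⟨k', hk', rfl⟩
      exact ⟨k ⊔ k', fun u v huv => sup_le_sup (hk huv) (hk' huv), hh_sup k k'⟩
    · rintro a ⟨k, hk, rfl⟩ b ⟨k', hk', rfl⟩
      exact ⟨k ⊓ k', fun u v huv => inf_le_inf (hk huv) (hk' huv), (hh_inf hk hk').symm⟩
  have hMT : M ⊆ T := by
    intro x hx
    rw [← hrange] at hx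
    obtain ⟨p, rfl⟩ := hx
    refine ⟨fun _ => p, antitone_const, ?_⟩
    have hdef : hh (fun _ => p) = univ.sup fun j => m p ⊓ c j := rfl
    rw [hdef]
    refine le_antisymm (Finset.sup_le fun j _ => inf_le_left) ?_
    calc m p = m p ⊓ c (Fin.last r) := by rw [ctop, inf_top_eq]
      _ ≤ _ := Finset.le_sup (f := fun j => m p ⊓ c j) (Finset.mem_univ (Fin.last r))
  have hCT : C ⊆ T := by
    intro x hx
    obtain ⟨j0, rfl⟩ := csurj x (Set.mem_insert_of_mem _ hx)
    refine ⟨fun j => if j ≤ j0 then Fin.last n else 0, ?_, ?_⟩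
    · intro u v huv
      dsimp only
      by_cases h2 : v ≤ j0
      · rw [if_pos h2, if_pos (huv.trans h2)]
      · by_cases h3 : u ≤ j0
        · rw [if_neg h2, if_pos h3]; exact Fin.zero_le _
        · rw [if_neg h2, if_neg h3]
    · have hdef : hh (fun j => if j ≤ j0 then Fin.last n else 0)
          = univ.sup fun j => m (if j ≤ j0 then Fin.last n else 0) ⊓ c j := rfl
      rw [hdef]
      refine le_antisymm (Finset.sup_le fun j _ => ?_) ?_
      · by_cases h1 : j ≤ j0
        · rw [if_pos h1, htop, top_inf_eq]; exact cmono h1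
        · rw [if_neg h1, hbot, bot_inf_eq]; exact bot_le
      · calc c j0 = m (if j0 ≤ j0 then Fin.last n else 0) ⊓ c j0 := by
              rw [if_pos le_rfl, htop, top_inf_eq]
          _ ≤ _ := Finset.le_sup
              (f := fun j => m (if j ≤ j0 then Fin.last n else 0) ⊓ c j)
              (Finset.mem_univ j0)
  have hclos : latticeClosure (M ∪ C) ⊆ T :=
    latticeClosure_min (Set.union_subset hMT hCT) hTsub
  intro a ha b hb d hd
  obtain ⟨ka, hka, rfl⟩ := hclos ha
  obtain ⟨kb, hkb, rfl⟩ := hclos hb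
  obtain ⟨kd, hkd, rfl⟩ := hclos hd
  have hkbd : Antitone (kb ⊔ kd) := fun u v huv => sup_le_sup (hkb huv) (hkd huv)
  calc hh ka ⊓ (hh kb ⊔ hh kd) = hh ka ⊓ hh (kb ⊔ kd) := by rw [hh_sup]
    _ = hh (ka ⊓ (kb ⊔ kd)) := hh_inf hka hkbd
    _ = hh ((ka ⊓ kb) ⊔ (ka ⊓ kd)) := by
        congr 1
        funext j
        have h1 : (ka ⊓ (kb ⊔ kd)) j = ka j ⊓ (kb j ⊔ kd j) := rfl
        have h2 : ((ka ⊓ kb) ⊔ (ka ⊓ kd)) j = (ka j ⊓ kb j) ⊔ (ka j ⊓ kd j) := rfl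
        rw [h1, h2, inf_sup_left]
    _ = hh (ka ⊓ kb) ⊔ hh (ka ⊓ kd) := hh_sup _ _
    _ = (hh ka ⊓ hh kb) ⊔ (hh ka ⊓ hh kd) := by
        rw [hh_inf hka hkb, hh_inf hka hkd]

end Chief


section Forward

variable {L : Type*} [Lattice L] [Fintype L] [BoundedOrder L]

lemma pair_chain {x y : L} (hxy : x ≤ y) : IsChain (· ≤ ·) ({x, y} : Set L) := by
  intro a ha b hb hab
  rcases ha with rfl | ha <;> rcases hb with rfl | hb
  · exact absurd rfl hab
  · rw [Set.mem_singleton_iff] at hb; subst hb; exact Or.inl hxy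
  · rw [Set.mem_singleton_iff] at ha; subst ha; exact Or.inr hxy
  · rw [Set.mem_singleton_iff] at ha hb; subst ha; subst hb; exact absurd rfl hab

/-- A chief chain consists of left-modular elements. -/
lemma leftModular_of_chief {M : Set L}
    (hchief : ∀ C : Set L, IsChain (· ≤ ·) C →
      ∀ a ∈ latticeClosure (M ∪ C), ∀ b ∈ latticeClosure (M ∪ C),
        ∀ d ∈ latticeClosure (M ∪ C), a ⊓ (b ⊔ d) = (a ⊓ b) ⊔ (a ⊓ d)) :
    ∀ m' ∈ M, IsLeftModular m' := by
  intro mm hmm x y hxy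
  have hx : x ∈ latticeClosure (M ∪ {x, y}) :=
    subset_latticeClosure (Or.inr (by simp))
  have hy : y ∈ latticeClosure (M ∪ {x, y}) :=
    subset_latticeClosure (Or.inr (by simp))
  have hm : mm ∈ latticeClosure (M ∪ {x, y}) := subset_latticeClosure (Or.inl hmm)
  have h := hchief {x, y} (pair_chain hxy.le) y hy x hx mm hm
  rw [inf_eq_right.2 hxy.le, inf_comm y mm] at h
  rw [inf_comm (x ⊔ mm) y]
  exact h.symm

/-- A chief chain induces a rank function. -/
lemma rank_of_chief {M : Set L} (hM : IsMaxChain (· ≤ ·) M)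
    (hchief : ∀ C : Set L, IsChain (· ≤ ·) C →
      ∀ a ∈ latticeClosure (M ∪ C), ∀ b ∈ latticeClosure (M ∪ C),
        ∀ d ∈ latticeClosure (M ∪ C), a ⊓ (b ⊔ d) = (a ⊓ b) ⊔ (a ⊓ d)) :
    ∃ ρ : L → ℕ, ρ ⊥ = 0 ∧ ∀ x y : L, x ⋖ y → ρ y = ρ x + 1 := by
  obtain ⟨n, m, hmono, hbot, htop, hrange, hcov⟩ := exists_chain_enum hM
  have hlmM := leftModular_of_chief hchief
  have hlm : ∀ k, IsLeftModular (m k) := fun k => hlmM _ (hrange ▸ Set.mem_range_self k)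
  refine ⟨fun x => (phi m x).card, ?_, ?_⟩
  · show (phi m (⊥ : L)).card = 0
    rw [phi_bot, Finset.card_empty]
  intro x y hxy
  show (phi m y).card = (phi m x).card + 1
  have hsub : phi m x ⊆ phi m y := phi_mono hmono hxy.lt.le
  -- existence of a new strict step
  have hex : ∃ j : Fin n, j ∈ phi m y ∧ j ∉ phi m x := by
    set s : Finset (Fin (n + 1)) := univ.filter fun i => ¬ (m i ⊓ x = m i ⊓ y) with hsdef
    have hsne : s.Nonempty := by
      refine ⟨Fin.last n, ?_⟩
      rw [hsdef, Finset.mem_filter]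
      refine ⟨Finset.mem_univ _, ?_⟩
      rw [htop, top_inf_eq, top_inf_eq]
      exact hxy.lt.ne
    obtain ⟨j', hj'def⟩ : ∃ v : Fin (n + 1), v = s.min' hsne := ⟨_, rfl⟩
    have hj's : j' ∈ s := hj'def ▸ s.min'_mem hsne
    have hj'0 : j' ≠ 0 := by
      intro h0
      rw [hsdef, Finset.mem_filter] at hj's
      refine hj's.2 ?_
      rw [h0, hbot, bot_inf_eq, bot_inf_eq]
    obtain ⟨i, rfl⟩ : ∃ i : Fin n, j' = i.succ := by
      have hlt := j'.isLt
      have h1 : (j' : ℕ) ≠ 0 := fun h => hj'0 (Fin.ext (by simpa using h))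
      refine ⟨⟨(j' : ℕ) - 1, by omega⟩, Fin.ext ?_⟩
      simp only [Fin.val_succ]
      omega
    have hcs : m i.castSucc ⊓ x = m i.castSucc ⊓ y := by
      by_contra hne
      have hmem : i.castSucc ∈ s := by
        rw [hsdef, Finset.mem_filter]; exact ⟨Finset.mem_univ _, hne⟩
      have hle := s.min'_le _ hmem
      rw [← hj'def] at hle
      exact absurd (lt_of_le_of_lt hle (Fin.castSucc_lt_succ (i := i))) (lt_irrefl _)
    have hnex : m i.succ ⊓ x ≠ m i.succ ⊓ y := by
      rw [hsdef, Finset.mem_filter] at hj's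
      exact hj's.2
    have hltx : m i.succ ⊓ x < m i.succ ⊓ y :=
      lt_of_le_of_ne (inf_le_inf_left _ hxy.lt.le) hnex
    have hiy : i ∈ phi m y := by
      rw [mem_phi]
      calc m i.castSucc ⊓ y = m i.castSucc ⊓ x := hcs.symm
        _ ≤ m i.succ ⊓ x := inf_le_inf_right _ (hmono.monotone (Fin.castSucc_le_succ i))
        _ < m i.succ ⊓ y := hltx
    have hstep : (m i.castSucc ⊓ y) ⋖ (m i.succ ⊓ y) := by
      rcases meet_step hcov hlm i y with h | h
      · rw [mem_phi] at hiy; exact absurd h hiy.ne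
      · exact h
    have hbetween : m i.castSucc ⊓ y ≤ m i.succ ⊓ x := by
      rw [← hcs]
      exact inf_le_inf_right _ (hmono.monotone (Fin.castSucc_le_succ i))
    have heq : m i.succ ⊓ x = m i.castSucc ⊓ y := by
      rcases eq_or_lt_of_le hbetween with h | h
      · exact h.symm
      · exact absurd hltx (hstep.2 h)
    refine ⟨i, hiy, ?_⟩
    rw [mem_phi, heq, ← hcs]
    exact lt_irrefl _
  obtain ⟨j, hjy, hjx⟩ := hex
  -- uniqueness of the new strict step, via distributivity
  have huniq : ∀ i1 i2 : Fin n, i1 < i2 → i1 ∈ phi m y → i1 ∉ phi m x →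
      i2 ∈ phi m y → i2 ∉ phi m x → False := by
    intro i1 i2 h12 h1y h1x h2y h2x
    set w := m i1.succ ⊓ y with hwdef
    have hwx : ¬ w ≤ x := by
      intro hwle
      have h1 : w ≤ m i1.castSucc ⊓ y := by
        have h2 : w ≤ m i1.succ ⊓ x := le_inf inf_le_left hwle
        rw [← not_mem_phi hmono h1x] at h2
        exact le_inf (h2.trans inf_le_left) inf_le_right
      rw [mem_phi] at h1y
      exact absurd (lt_of_lt_of_le h1y h1) (lt_irrefl _)
    have hxw : x < x ⊔ w := left_lt_sup.2 hwx
    have hxwy : x ⊔ w = y := by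
      have hle : x ⊔ w ≤ y := sup_le hxy.lt.le inf_le_right
      rcases eq_or_lt_of_le hle with h | h
      · exact h
      · exact absurd h (hxy.2 hxw)
    have hxS : x ∈ latticeClosure (M ∪ {x, y}) :=
      subset_latticeClosure (Or.inr (by simp))
    have hyS : y ∈ latticeClosure (M ∪ {x, y}) :=
      subset_latticeClosure (Or.inr (by simp))
    have hmS : ∀ k, m k ∈ latticeClosure (M ∪ {x, y}) :=
      fun k => subset_latticeClosure (Or.inl (hrange ▸ Set.mem_range_self k))
    have hwS : w ∈ latticeClosure (M ∪ {x, y}) :=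
      isSublattice_latticeClosure.infClosed (hmS i1.succ) hyS
    have hdist := hchief {x, y} (pair_chain hxy.lt.le) (m i2.succ) (hmS i2.succ) x hxS w hwS
    have hw2 : w ≤ m i2.castSucc := by
      have h3 : i1.succ ≤ i2.castSucc := by
        rw [Fin.le_def]
        simp only [Fin.val_succ, Fin.coe_castSucc]
        rw [Fin.lt_def] at h12
        omega
      exact inf_le_left.trans (hmono.monotone h3)
    have hfin : m i2.succ ⊓ y ≤ m i2.castSucc ⊓ y := by
      calc m i2.succ ⊓ y = m i2.succ ⊓ (x ⊔ w) := by rw [hxwy]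
        _ = (m i2.succ ⊓ x) ⊔ (m i2.succ ⊓ w) := hdist
        _ = (m i2.castSucc ⊓ x) ⊔ w := by
            rw [← not_mem_phi hmono h2x,
              inf_eq_right.2 (hw2.trans (hmono.monotone (Fin.castSucc_le_succ i2)))]
        _ ≤ m i2.castSucc ⊓ y :=
            sup_le (le_inf inf_le_left (inf_le_right.trans hxy.lt.le))
              (le_inf hw2 inf_le_right)
    rw [mem_phi] at h2y
    exact absurd (lt_of_lt_of_le h2y hfin) (lt_irrefl _)
  have hphiy : phi m y = insert j (phi m x) := by
    ext i
    simp only [Finset.mem_insert]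
    constructor
    · intro hiy
      by_cases hix : i ∈ phi m x
      · exact Or.inr hix
      · rcases lt_trichotomy i j with h | h | h
        · exact (huniq i j h hiy hix hjy hjx).elim
        · exact Or.inl h
        · exact (huniq j i h hjy hjx hiy hix).elim
    · rintro (rfl | hix)
      · exact hjy
      · exact hsub hix
  rw [hphiy, Finset.card_insert_of_notMem hjx]

end Forward

end McNamaraThomasAux

/-- (McNamara–Thomas) A maximal chain `M` of a finite lattice `L` is a chief chain if and
only if `L` is graded and every element of `M` is left-modular. -/
theorem chiefChain_iff_graded_leftModular {L : Type*} [Lattice L] [Fintype L] [BoundedOrder L]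
    (M : Set L) (hM : IsMaxChain (· ≤ ·) M) :
    IsChiefChain M ↔ (∃ ρ : L → ℕ, IsRankFunction ρ) ∧ ∀ m ∈ M, IsLeftModular m := by
  constructor
  · intro hchief
    refine ⟨?_, McNamaraThomasAux.leftModular_of_chief hchief⟩
    obtain ⟨ρ, h0, hc⟩ := McNamaraThomasAux.rank_of_chief hM hchief
    exact ⟨ρ, h0, hc⟩
  · rintro ⟨⟨ρ, hρ0, hρc⟩, hlmM⟩
    exact McNamaraThomasAux.isChiefChain_of hM ρ hρ0 hρc hlmM
end

section
/- Let L be a finite lattice that is graded with rank function ρ : L → ℕ. An element m of L is left-modular if and only if m is rank modular, i.e., ρ(m ∨ x) + ρ(m ∧ x) = ρ(m) + ρ(x) for every x ∈ L. -/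
/-- In a graded finite lattice with rank function `ρ`, an element is left-modular if and
only if it is rank modular. -/
theorem leftModular_iff_rankModular {L : Type*} [Lattice L] [Fintype L] [OrderBot L]
    (ρ : L → ℕ) (hρ : IsRankFunction ρ) (m : L) :
    IsLeftModular m ↔ ∀ x : L, ρ (m ⊔ x) + ρ (m ⊓ x) = ρ m + ρ x := by
  obtain ⟨hbot, hcov⟩ := hρ
  letI : OrderTop L := Fintype.toOrderTop L
  haveI : IsStronglyAtomic L := IsStronglyAtomic.of_wellFounded_lt wellFounded_lt
  -- ρ is strictly monotone
  have strict : ∀ a b : L, a < b → ρ a < ρ b := by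
    intro a
    induction a using WellFoundedGT.induction with
    | _ a ih =>
      intro b hab
      obtain ⟨x, hax, hxb⟩ := exists_covBy_le_of_lt hab
      rcases eq_or_lt_of_le hxb with rfl | hlt
      · rw [hcov _ _ hax]; omega
      · have h1 := ih x hax.lt (b) hlt
        have := hcov _ _ hax
        omega
  have mono : ∀ a b : L, a ≤ b → ρ a ≤ ρ b := by
    intro a b hab
    rcases eq_or_lt_of_le hab with rfl | h
    · exact le_rfl
    · exact (strict a b h).le
  constructor
  · -- left modular → rank modular
    intro hm
    -- the key step: along a cover, ρ(m⊔·)+ρ(m⊓·) increases by at least 1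
    have step : ∀ z w : L, z ⋖ w →
        ρ (m ⊔ z) + ρ (m ⊓ z) < ρ (m ⊔ w) + ρ (m ⊓ w) := by
      intro z w hzw
      have h1 : m ⊔ z ≤ m ⊔ w := sup_le_sup_left hzw.le _
      have h2 : m ⊓ z ≤ m ⊓ w := inf_le_inf_left _ hzw.le
      have hne : m ⊔ z ≠ m ⊔ w ∨ m ⊓ z ≠ m ⊓ w := by
        by_contra hc
        push_neg at hc
        obtain ⟨e1, e2⟩ := hc
        have hlm := hm z w hzw.lt
        rw [← e2] at hlm
        have hz : z ⊔ m ⊓ z = z := sup_eq_left.mpr inf_le_right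
        rw [hz] at hlm
        have hw : (z ⊔ m) ⊓ w = w := by
          rw [inf_eq_right]
          calc w ≤ m ⊔ w := le_sup_right
          _ = m ⊔ z := e1.symm
          _ = z ⊔ m := sup_comm _ _
        rw [hw] at hlm
        exact hzw.lt.ne hlm
      rcases hne with hne | hne
      · have := strict _ _ (lt_of_le_of_ne h1 hne)
        have := mono _ _ h2
        omega
      · have := strict _ _ (lt_of_le_of_ne h2 hne)
        have := mono _ _ h1
        omega
    -- lower bound, by induction from ⊥
    have lower : ∀ x : L, ρ m + ρ x ≤ ρ (m ⊔ x) + ρ (m ⊓ x) := by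
      intro x
      induction x using WellFoundedLT.induction with
      | _ x ih =>
        rcases eq_or_ne x ⊥ with rfl | hx
        · simp [hbot]
        · have hmin : ¬ IsMin x := by
            simp [isMin_iff_eq_bot, hx]
          obtain ⟨w, hwx⟩ := exists_covBy_of_wellFoundedGT hmin
          have hIH := ih w hwx.lt
          have hstep := step w x hwx
          have := hcov _ _ hwx
          omega
    -- upper bound, by induction from ⊤
    have upper : ∀ x : L, ρ (m ⊔ x) + ρ (m ⊓ x) ≤ ρ m + ρ x := by
      intro x
      induction x using WellFoundedGT.induction with
      | _ x ih =>
        rcases eq_or_ne x ⊤ with rfl | hx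
        · have := mono m ⊤ le_top
          simp; omega
        · have hmax : ¬ IsMax x := by
            simp [isMax_iff_eq_top, hx]
          obtain ⟨w, hxw⟩ := exists_covBy_of_wellFoundedLT hmax
          have hIH := ih w hxw.lt
          have hstep := step x w hxw
          have := hcov _ _ hxw
          omega
    intro x
    exact le_antisymm (upper x) (lower x)
  · -- rank modular → left modular
    intro hr x y hxy
    set a := x ⊔ m ⊓ y with ha
    set b := (x ⊔ m) ⊓ y with hb
    have hab : a ≤ b :=
      sup_le (le_inf le_sup_left hxy.le)
        (le_inf (inf_le_left.trans le_sup_right) inf_le_right)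
    -- m ⊔ a = m ⊔ b
    have hsa : m ⊔ a = m ⊔ x := by
      rw [ha, sup_comm x, ← sup_assoc, sup_inf_self]
    have hsb : m ⊔ b = m ⊔ x := by
      apply le_antisymm
      · exact sup_le le_sup_left (inf_le_left.trans (sup_le le_sup_right le_sup_left))
      · rw [← hsa]
        exact sup_le_sup_left hab _
    -- m ⊓ a = m ⊓ b
    have hia : m ⊓ y ≤ m ⊓ a := le_inf inf_le_left le_sup_right
    have hib : m ⊓ b ≤ m ⊓ y := inf_le_inf_left _ inf_le_right
    have hiab : m ⊓ a = m ⊓ b :=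
      le_antisymm (inf_le_inf_left _ hab) (hib.trans hia)
    have hra := hr a
    have hrb := hr b
    rw [hsa, hiab] at hra
    rw [hsb] at hrb
    have hrab : ρ a = ρ b := by omega
    rcases eq_or_lt_of_le hab with h | h
    · exact h
    · exact absurd hrab (strict a b h).ne
end

section
/- An element z of a lattice L is left-modular if and only if for each pair of elements x < y of L, either x ∨ z ≠ y ∨ z or x ∧ z ≠ y ∧ z. -/
/-- Pentagonal characterization of left-modularity: `z` is left-modular if and only if
for each `x < y`, either `x ⊔ z ≠ y ⊔ z` or `x ⊓ z ≠ y ⊓ z`. -/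
theorem leftModular_iff_pentagon {L : Type*} [Lattice L] (z : L) :
    IsLeftModular z ↔ ∀ x y : L, x < y → (x ⊔ z ≠ y ⊔ z ∨ x ⊓ z ≠ y ⊓ z) := by
  constructor
  · intro h x y hxy
    by_contra hc
    push_neg at hc
    obtain ⟨h1, h2⟩ := hc
    have := h x y hxy
    have hl : x ⊔ (z ⊓ y) = x := by
      rw [inf_comm z y, ← h2]
      exact sup_inf_self
    have hr : (x ⊔ z) ⊓ y = y := by
      rw [h1]
      exact inf_eq_right.mpr le_sup_left
    rw [hl, hr] at this
    exact hxy.ne this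
  · intro h x y hxy
    set a := x ⊔ (z ⊓ y) with ha
    set b := (x ⊔ z) ⊓ y with hb
    have hab : a ≤ b := sup_le (le_inf le_sup_left hxy.le)
      (le_inf (le_sup_of_le_right inf_le_left) inf_le_right)
    rcases eq_or_lt_of_le hab with heq | hlt
    · exact heq
    · exfalso
      rcases h a b hlt with hne | hne
      · apply hne
        have h1 : a ⊔ z = x ⊔ z := by
          rw [ha, sup_assoc]
          congr 1
          exact sup_eq_right.mpr inf_le_left
        have h2 : b ⊔ z ≤ x ⊔ z := sup_le (le_trans inf_le_left le_rfl) le_sup_right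
        have h3 : x ⊔ z ≤ b ⊔ z := sup_le (le_trans (le_trans le_sup_left hab) le_sup_left) le_sup_right
        rw [h1]
        exact le_antisymm h3 h2
      · apply hne
        have h1 : z ⊓ y ≤ a ⊓ z := le_inf le_sup_right inf_le_left
        have h2 : b ⊓ z ≤ z ⊓ y := le_inf inf_le_right (le_trans inf_le_left inf_le_right)
        have h3 : a ⊓ z ≤ b ⊓ z := inf_le_inf_right z hab
        have e1 : a ⊓ z = z ⊓ y := le_antisymm (le_trans h3 h2) h1
        have e2 : b ⊓ z = z ⊓ y := le_antisymm h2 (le_trans h1 h3)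
        rw [e1, e2]
end

section
/- If z is a left-modular element of a lattice L and y covers x in L, then exactly one of the two equalities x ∨ z = y ∨ z and x ∧ z = y ∧ z holds. -/
/-- If `z` is left-modular and `y` covers `x`, then exactly one of `x ⊔ z = y ⊔ z` and
`x ⊓ z = y ⊓ z` holds. -/
theorem leftModular_covBy_xor {L : Type*} [Lattice L] (z : L) (hz : IsLeftModular z)
    (x y : L) (hxy : x ⋖ y) :
    Xor' (x ⊔ z = y ⊔ z) (x ⊓ z = y ⊓ z) := by
  have hlt := hxy.lt
  have hmod := hz x y hlt
  have hmem : x ≤ x ⊔ (z ⊓ y) := le_sup_left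
  have hle : x ⊔ (z ⊓ y) ≤ y := sup_le hlt.le inf_le_right
  rcases hxy.eq_or_eq hmem hle with h | h
  · -- x ⊔ (z ⊓ y) = x : meet equality holds, join fails
    right
    have hzy : z ⊓ y ≤ x := le_of_sup_eq (by rw [sup_comm]; exact h)
    constructor
    · exact le_antisymm (inf_le_inf_right z hlt.le)
        (le_inf ((inf_comm y z).le.trans hzy) inf_le_right)
    · intro hjoin
      have hy : y ≤ x ⊔ z := le_sup_left.trans hjoin.ge
      have : (x ⊔ z) ⊓ y = y := inf_eq_right.mpr hy
      rw [this] at hmod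
      exact hlt.ne (h.symm.trans hmod)
  · -- x ⊔ (z ⊓ y) = y : join equality holds, meet fails
    left
    constructor
    · have hy : y ≤ x ⊔ z := h.ge.trans (sup_le le_sup_left (inf_le_left.trans le_sup_right))
      exact le_antisymm (sup_le_sup_right hlt.le z)
        (sup_le hy le_sup_right)
    · intro hmeet
      have hzy : z ⊓ y ≤ x := by rw [inf_comm, ← hmeet]; exact inf_le_left
      have : x ⊔ (z ⊓ y) = x := sup_eq_left.mpr hzy
      exact hlt.ne' (h.symm.trans this)
end

section
/- Let L be a lattice and let M be a chain-modular chain in L containing ⊥ and ⊤. If a₁ ≥ a₂ ≥ ⋯ ≥ a_r are elements of M and b₁ ≤ b₂ ≤ ⋯ ≤ b_r are elements of an arbitrary chain in L, then (b₁ ∨ a₁) ∧ (b₂ ∨ a₂) ∧ ⋯ ∧ (b_r ∨ a_r) = b₁ ∨ (a₁ ∧ b₂) ∨ (a₂ ∧ b₃) ∨ ⋯ ∨ (a_{r−1} ∧ b_r) ∨ a_r, and (a₁ ∧ b₁) ∨ (a₂ ∧ b₂) ∨ ⋯ ∨ (a_r ∧ b_r) = a₁ ∧ (b₁ ∨ a₂)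 ∧ (b₂ ∨ a₃) ∧ ⋯ ∧ (b_{r−1} ∨ a_r) ∧ b_r. -/
section EBLhelpers

variable {L : Type*} [Lattice L]

private lemma EBL.lm_le {m : L} (h : IsLeftModular m) {x y : L} (hxy : x ≤ y) :
    x ⊔ (m ⊓ y) = (x ⊔ m) ⊓ y := by
  rcases hxy.lt_or_eq with h' | rfl
  · exact h x y h'
  · rw [inf_comm m x, sup_inf_self, inf_eq_right.mpr le_sup_left]

private lemma EBL.rcm_le {M : Set L} (h : IsRightChainModular M) {x y : L}
    (hx : x ∈ M) (hy : y ∈ M) (hxy : x ≤ y) (z : L) :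
    x ⊔ (z ⊓ y) = (x ⊔ z) ⊓ y := by
  rcases hxy.lt_or_eq with h' | rfl
  · exact h x hx y hy h' z
  · rw [inf_comm z x, sup_inf_self, inf_eq_right.mpr le_sup_left]

private lemma EBL.image_val_univ (n : ℕ) :
    (Finset.univ : Finset (Fin n)).image Fin.val = Finset.range n := by
  ext x
  simp only [Finset.mem_image, Finset.mem_univ, true_and, Finset.mem_range]
  exact ⟨fun ⟨a, ha⟩ => ha ▸ a.isLt, fun h => ⟨⟨x, h⟩, rfl⟩⟩

private lemma EBL.sup_range_fin [OrderBot L] (n : ℕ) (g : ℕ → L) :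
    (Finset.range n).sup g = Finset.univ.sup (fun i : Fin n => g i.val) := by
  rw [← EBL.image_val_univ, Finset.sup_image]; rfl

private lemma EBL.inf_range_fin [OrderTop L] (n : ℕ) (g : ℕ → L) :
    (Finset.range n).inf g = Finset.univ.inf (fun i : Fin n => g i.val) := by
  rw [← EBL.image_val_univ, Finset.inf_image]; rfl

private lemma EBL.inf_range_succ_front [OrderTop L] (f : ℕ → L) (n : ℕ) :
    (Finset.range (n+1)).inf f = f 0 ⊓ (Finset.range n).inf (fun i => f (i+1)) := by
  induction n with
  | zero => simp
  | succ n ih =>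
    rw [Finset.range_add_one, Finset.inf_insert, ih, Finset.range_add_one, Finset.inf_insert,
      inf_left_comm]

private lemma EBL.part1 [BoundedOrder L] {M : Set L}
    (hrcm : IsRightChainModular M) (hlm : ∀ m ∈ M, IsLeftModular m) :
    ∀ (r : ℕ) (a b : ℕ → L), (∀ i, a i ∈ M) → Antitone a → Monotone b →
      (Finset.range (r+1)).inf (fun i => b i ⊔ a i) =
        b 0 ⊔ (Finset.range r).sup (fun i => a i ⊓ b (i+1)) ⊔ a r := by
  intro r
  induction r with
  | zero => intro a b _ _ _; simp
  | succ r ih =>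
    intro a b haM ha hb
    rw [Finset.range_add_one, Finset.inf_insert, ih a b haM ha hb,
      Finset.range_add_one, Finset.sup_insert]
    set S := (Finset.range r).sup (fun i => a i ⊓ b (i+1)) with hS
    have hX : b 0 ⊔ S ≤ b (r+1) ⊔ a (r+1) := by
      apply sup_le
      · exact le_sup_of_le_left (hb (Nat.zero_le _))
      · refine le_sup_of_le_left (Finset.sup_le fun i hi => ?_)
        exact le_trans inf_le_right (hb (by simp only [Finset.mem_range] at hi; omega))
    have h2 : a r ⊓ (b (r+1) ⊔ a (r+1)) = (a r ⊓ b (r+1)) ⊔ a (r+1) := by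
      calc a r ⊓ (b (r+1) ⊔ a (r+1)) = (a (r+1) ⊔ b (r+1)) ⊓ a r := by
            rw [inf_comm, sup_comm]
        _ = a (r+1) ⊔ (b (r+1) ⊓ a r) :=
            (EBL.rcm_le hrcm (haM (r+1)) (haM r) (ha (Nat.le_succ r)) (b (r+1))).symm
        _ = (a r ⊓ b (r+1)) ⊔ a (r+1) := by rw [inf_comm, sup_comm]
    have h1 : (b 0 ⊔ S) ⊔ (a r ⊓ (b (r+1) ⊔ a (r+1))) =
        ((b 0 ⊔ S) ⊔ a r) ⊓ (b (r+1) ⊔ a (r+1)) := EBL.lm_le (hlm _ (haM r)) hX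
    calc (b (r+1) ⊔ a (r+1)) ⊓ (b 0 ⊔ S ⊔ a r)
        = ((b 0 ⊔ S) ⊔ a r) ⊓ (b (r+1) ⊔ a (r+1)) := by rw [inf_comm]
      _ = (b 0 ⊔ S) ⊔ (a r ⊓ (b (r+1) ⊔ a (r+1))) := h1.symm
      _ = (b 0 ⊔ S) ⊔ ((a r ⊓ b (r+1)) ⊔ a (r+1)) := by rw [h2]
      _ = b 0 ⊔ (a r ⊓ b (r+1) ⊔ S) ⊔ a (r+1) := by ac_rfl

private lemma EBL.part2 [BoundedOrder L] {M : Set L}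
    (hrcm : IsRightChainModular M) (hlm : ∀ m ∈ M, IsLeftModular m) :
    ∀ (r : ℕ) (a b : ℕ → L), (∀ i, a i ∈ M) → Antitone a → Monotone b →
      (Finset.range (r+1)).sup (fun i => a i ⊓ b i) =
        a 0 ⊓ (Finset.range r).inf (fun i => b i ⊔ a (i+1)) ⊓ b r := by
  intro r
  induction r with
  | zero => intro a b _ _ _; simp
  | succ r ih =>
    intro a b haM ha hb
    have key := ih (fun i => a (i+1)) (fun i => b (i+1)) (fun i => haM (i+1))
      (fun i j hij => ha (by omega)) (fun i j hij => hb (by omega))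
    rw [show ((Finset.range (r+1+1)).sup (fun i => a i ⊓ b i)) =
        (a 0 ⊓ b 0) ⊔ (Finset.range (r+1)).sup (fun i => a (i+1) ⊓ b (i+1)) from by
          induction (r+1) with
          | zero => simp
          | succ n ihn =>
            rw [Finset.range_add_one, Finset.sup_insert, ihn, Finset.range_add_one,
              Finset.sup_insert, sup_left_comm],
      key, EBL.inf_range_succ_front]
    set T := (Finset.range r).inf (fun i => b (i+1) ⊔ a (i+1+1)) with hT
    set Z := T ⊓ b (r+1) with hZ
    have hbZ : b 0 ≤ Z := by
      refine le_inf (Finset.le_inf fun i hi => ?_) (hb (Nat.zero_le _))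
      exact le_trans (hb (Nat.zero_le _)) le_sup_left
    have ha10 : a 1 ≤ a 0 := ha (Nat.zero_le 1)
    have hxly : a 0 ⊓ b 0 ≤ a 0 ⊓ Z := inf_le_inf_left _ hbZ
    have h1 : (a 0 ⊓ b 0) ⊔ (a 1 ⊓ (a 0 ⊓ Z)) = ((a 0 ⊓ b 0) ⊔ a 1) ⊓ (a 0 ⊓ Z) :=
      EBL.lm_le (hlm _ (haM 1)) hxly
    have h1' : a 1 ⊓ (a 0 ⊓ Z) = a 1 ⊓ Z := by
      rw [← inf_assoc, inf_eq_left.mpr ha10]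
    have h2 : (a 0 ⊓ b 0) ⊔ a 1 = (a 1 ⊔ b 0) ⊓ a 0 := by
      calc (a 0 ⊓ b 0) ⊔ a 1 = a 1 ⊔ (b 0 ⊓ a 0) := by rw [sup_comm, inf_comm]
        _ = (a 1 ⊔ b 0) ⊓ a 0 := EBL.rcm_le hrcm (haM 1) (haM 0) ha10 (b 0)
    calc (a 0 ⊓ b 0) ⊔ (a 1 ⊓ T ⊓ b (r+1))
        = (a 0 ⊓ b 0) ⊔ (a 1 ⊓ Z) := by rw [hZ, inf_assoc]
      _ = (a 0 ⊓ b 0) ⊔ (a 1 ⊓ (a 0 ⊓ Z)) := by rw [h1']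
      _ = ((a 0 ⊓ b 0) ⊔ a 1) ⊓ (a 0 ⊓ Z) := h1
      _ = ((a 1 ⊔ b 0) ⊓ a 0) ⊓ (a 0 ⊓ Z) := by rw [h2]
      _ = a 0 ⊓ ((b 0 ⊔ a 1) ⊓ T) ⊓ b (r+1) := by
          rw [sup_comm (a 1) (b 0)]
          rw [show (b 0 ⊔ a 1) ⊓ a 0 ⊓ (a 0 ⊓ Z) = a 0 ⊓ ((b 0 ⊔ a 1) ⊓ Z) ⊓ a 0 from by ac_rfl]
          rw [inf_comm _ (a 0), ← inf_assoc, inf_idem, hZ, ← inf_assoc, ← inf_assoc,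
            inf_assoc (a 0) (b 0 ⊔ a 1) T]

end EBLhelpers

/-- Extended Birkhoff lemma: for a chain-modular chain `M` containing `⊥` and `⊤`,
elements `a 0 ≥ a 1 ≥ ⋯ ≥ a r` of `M` and elements `b 0 ≤ b 1 ≤ ⋯ ≤ b r` of an arbitrary
chain satisfy the two dual identities. -/
theorem extended_birkhoff_lemma {L : Type*} [Lattice L] [BoundedOrder L]
    (M : Set L) (hM : IsChain (· ≤ ·) M) (hmod : IsChainModular M)
    (hbot : ⊥ ∈ M) (htop : ⊤ ∈ M)
    (r : ℕ) (a b : Fin (r + 1) → L)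
    (haM : ∀ i, a i ∈ M) (ha : Antitone a)
    (C : Set L) (hC : IsChain (· ≤ ·) C) (hbC : ∀ i, b i ∈ C) (hb : Monotone b) :
    (Finset.univ.inf' Finset.univ_nonempty (fun i => b i ⊔ a i) =
        b 0 ⊔ Finset.univ.sup (fun i : Fin r => a i.castSucc ⊓ b i.succ) ⊔ a (Fin.last r)) ∧
    (Finset.univ.sup' Finset.univ_nonempty (fun i => a i ⊓ b i) =
        a 0 ⊓ Finset.univ.inf (fun i : Fin r => b i.castSucc ⊔ a i.succ) ⊓ b (Fin.last r)) := by
  obtain ⟨hrcm, hlm⟩ := hmod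
  set A : ℕ → L := fun i => a ⟨min i r, by omega⟩ with hA
  set B : ℕ → L := fun i => b ⟨min i r, by omega⟩ with hB
  have hAM : ∀ i, A i ∈ M := fun i => haM _
  have hAanti : Antitone A := fun i j hij => ha (by simp only [Fin.mk_le_mk]; omega)
  have hBmono : Monotone B := fun i j hij => hb (by simp only [Fin.mk_le_mk]; omega)
  have hAa : ∀ i : Fin (r+1), A i.val = a i := fun i => by
    show a ⟨min i.val r, _⟩ = a i
    congr 1
    exact Fin.ext (Nat.min_eq_left (Nat.lt_succ_iff.mp i.isLt))
  have hBb : ∀ i : Fin (r+1), B i.val = b i := fun i => by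
    show b ⟨min i.val r, _⟩ = b i
    congr 1
    exact Fin.ext (Nat.min_eq_left (Nat.lt_succ_iff.mp i.isLt))
  have hB0 : B 0 = b 0 := hBb 0
  have hA0 : A 0 = a 0 := hAa 0
  have hAr : A r = a (Fin.last r) := hAa (Fin.last r)
  have hBr : B r = b (Fin.last r) := hBb (Fin.last r)
  have hAcast : ∀ i : Fin r, A i.val = a i.castSucc := fun i => hAa i.castSucc
  have hBcast : ∀ i : Fin r, B i.val = b i.castSucc := fun i => hBb i.castSucc
  have hAsucc : ∀ i : Fin r, A (i.val + 1) = a i.succ := fun i => hAa i.succ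
  have hBsucc : ∀ i : Fin r, B (i.val + 1) = b i.succ := fun i => hBb i.succ
  constructor
  · rw [Finset.inf'_eq_inf]
    have lhs : Finset.univ.inf (fun i : Fin (r+1) => b i ⊔ a i) =
        (Finset.range (r+1)).inf (fun i => B i ⊔ A i) := by
      rw [EBL.inf_range_fin]
      exact Finset.inf_congr rfl fun i _ => by rw [hAa i, hBb i]
    have rhs : Finset.univ.sup (fun i : Fin r => a i.castSucc ⊓ b i.succ) =
        (Finset.range r).sup (fun i => A i ⊓ B (i+1)) := by
      rw [EBL.sup_range_fin]
      exact Finset.sup_congr rfl fun i _ => by rw [hAcast i, hBsucc i]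
    rw [lhs, rhs, ← hB0, ← hAr]
    exact EBL.part1 hrcm hlm r A B hAM hAanti hBmono
  · rw [Finset.sup'_eq_sup]
    have lhs : Finset.univ.sup (fun i : Fin (r+1) => a i ⊓ b i) =
        (Finset.range (r+1)).sup (fun i => A i ⊓ B i) := by
      rw [EBL.sup_range_fin]
      exact Finset.sup_congr rfl fun i _ => by rw [hAa i, hBb i]
    have rhs : Finset.univ.inf (fun i : Fin r => b i.castSucc ⊔ a i.succ) =
        (Finset.range r).inf (fun i => B i ⊔ A (i+1)) := by
      rw [EBL.inf_range_fin]
      exact Finset.inf_congr rfl fun i _ => by rw [hBcast i, hAsucc i]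
    rw [lhs, rhs, ← hA0, ← hBr]
    exact EBL.part2 hrcm hlm r A B hAM hAanti hBmono
end

section
/- Let L be a finite lattice that is graded with rank function ρ : L → ℕ, and let m < m' be two rank modular elements of L. Then for every z ∈ L, m ∨ (z ∧ m') = (m ∨ z) ∧ m'. In particular, a rank modular maximal chain in a graded finite lattice is right chain-modular. -/
private lemma rank_lt_of_lt {L : Type*} [Lattice L] [Fintype L] [OrderBot L]
    {ρ : L → ℕ} (hρ : IsRankFunction ρ) : ∀ x y : L, x < y → ρ x < ρ y := by
  intro x
  induction x using WellFoundedGT.induction with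
  | _ x ih =>
    intro y h
    obtain ⟨w, hxw, hwy⟩ := exists_covBy_le_of_lt h
    rcases hwy.lt_or_eq with hlt | rfl
    · have h1 : ρ x < ρ w := by rw [hρ.2 x w hxw]; omega
      exact h1.trans (ih w hxw.lt y hlt)
    · rw [hρ.2 x w hxw]; omega

private lemma aux_pair {L : Type*} [Lattice L] [Fintype L] [OrderBot L]
    {ρ : L → ℕ} (hρ : IsRankFunction ρ) {m m' : L} (hmm : m < m')
    (hm : IsRankModular ρ m) (hm' : IsRankModular ρ m') :
    ∀ z : L, m ⊔ (z ⊓ m') = (m ⊔ z) ⊓ m' := by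
  intro z
  set a := m ⊔ (z ⊓ m') with ha
  set b := (m ⊔ z) ⊓ m' with hb
  have hle : a ≤ b := sup_le (le_inf le_sup_left hmm.le)
    (inf_le_inf le_sup_right le_rfl)
  have E1 : ρ a + ρ (m ⊓ z) = ρ m + ρ (z ⊓ m') := by
    have := hm (z ⊓ m')
    rwa [show m ⊓ (z ⊓ m') = m ⊓ z by
      rw [inf_comm z m', ← inf_assoc, inf_eq_left.mpr hmm.le]] at this
  have E2 : ρ (m' ⊔ z) + ρ b = ρ m' + ρ (m ⊔ z) := by
    have := hm' (m ⊔ z)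
    rwa [show m' ⊔ (m ⊔ z) = m' ⊔ z by
      rw [← sup_assoc, sup_eq_left.mpr hmm.le], inf_comm m'] at this
  have E3 : ρ (m ⊔ z) + ρ (m ⊓ z) = ρ m + ρ z := hm z
  have E4 : ρ (m' ⊔ z) + ρ (z ⊓ m') = ρ m' + ρ z := by
    have := hm' z; rwa [inf_comm m' z] at this
  have hr : ρ a = ρ b := by omega
  rcases hle.lt_or_eq with hlt | h
  · exact absurd hr (rank_lt_of_lt hρ a b hlt).ne
  · exact h

/-- If `m < m'` are rank modular elements of a graded finite lattice, then for every `z`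
the right chain-modular identity `m ⊔ (z ⊓ m') = (m ⊔ z) ⊓ m'` holds. In particular, a
rank modular maximal chain in a graded finite lattice is right chain-modular. -/
theorem rankModular_pair_rightModular {L : Type*} [Lattice L] [Fintype L] [OrderBot L]
    (ρ : L → ℕ) (hρ : IsRankFunction ρ) (m m' : L) (hmm : m < m')
    (hm : IsRankModular ρ m) (hm' : IsRankModular ρ m') :
    (∀ z : L, m ⊔ (z ⊓ m') = (m ⊔ z) ⊓ m') ∧
      (∀ M : Set L, IsMaxChain (· ≤ ·) M → (∀ a ∈ M, IsRankModular ρ a) →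
        IsRightChainModular M) := by
  refine ⟨aux_pair hρ hmm hm hm', ?_⟩
  intro M _ hMod x hx y hy hxy z
  exact aux_pair hρ hxy (hMod x hx) (hMod y hy) z
end

section
/- Let L be a finite lattice and let M be a chain-modular maximal chain of L consisting of ⊥ = m₀ ⋖ m₁ ⋖ ⋯ ⋖ m_n = ⊤. Define ρ : L → ℕ by ρ(y) = #{ i : 0 ≤ i < n, m_{i+1} ∧ y > m_i ∧ y }. Then for every x ∈ L and every index j, ρ(x ∨ m_j) + ρ(x ∧ m_j) = ρ(x) + ρ(m_j); that is, every element of M is rank modular with respect to ρ. Moreover ρ(m_j) = j for each j. -/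
/-- Let `⊥ = m 0 ⋖ m 1 ⋖ ⋯ ⋖ m n = ⊤` be a chain-modular maximal chain of a finite
lattice, and let `ρ y = #{i : m (i+1) ⊓ y > m i ⊓ y}`. Then every element of the chain is
rank modular with respect to `ρ`, and `ρ (m j) = j`. -/
theorem chainModular_rho_rankModular {L : Type*} [Lattice L] [Fintype L] [BoundedOrder L]
    (n : ℕ) (m : Fin (n + 1) → L) (h0 : m 0 = ⊥) (hn : m (Fin.last n) = ⊤)
    (hcov : ∀ i : Fin n, m i.castSucc ⋖ m i.succ)
    (hmod : IsChainModular (Set.range m))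
    (ρ : L → ℕ)
    (hρ : ∀ y : L, ρ y =
      {i : Fin n | m i.castSucc ⊓ y < m i.succ ⊓ y}.ncard) :
    (∀ x : L, ∀ j : Fin (n + 1),
        ρ (x ⊔ m j) + ρ (x ⊓ m j) = ρ x + ρ (m j)) ∧
      ∀ j : Fin (n + 1), ρ (m j) = (j : ℕ) := by
  classical
  have hsm : StrictMono m := by
    rw [Fin.strictMono_iff_lt_succ]
    exact fun i => (hcov i).lt
  have hmono : Monotone m := hsm.monotone
  -- key lemma: for j ≤ k, m k ⊓ (x ⊔ m j) = (m k ⊓ x) ⊔ m j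
  have keyA : ∀ (x : L) (j k : Fin (n + 1)), j ≤ k →
      m k ⊓ (x ⊔ m j) = (m k ⊓ x) ⊔ m j := by
    intro x j k hjk
    rcases eq_or_lt_of_le hjk with h | h
    · subst h
      rw [inf_eq_left.2 le_sup_right, sup_eq_right.2 inf_le_left]
    · have h2 := hmod.1 (m j) ⟨j, rfl⟩ (m k) ⟨k, rfl⟩ (hsm h) x
      rw [inf_comm (m k), sup_comm x, sup_comm (m k ⊓ x), inf_comm (m k) x]
      exact h2.symm
  -- characterization for sup
  have hP_sup : ∀ (x : L) (j : Fin (n + 1)) (i : Fin n),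
      (m i.castSucc ⊓ (x ⊔ m j) < m i.succ ⊓ (x ⊔ m j)) ↔
        ((i : ℕ) < (j : ℕ) ∨ m i.castSucc ⊓ x < m i.succ ⊓ x) := by
    intro x j i
    by_cases h : (i : ℕ) < (j : ℕ)
    · have hsj : m i.succ ≤ m j := hmono (by simpa [Fin.le_def] using h)
      have hcj : m i.castSucc ≤ m j := le_trans (hmono (by simp [Fin.le_def])) hsj
      rw [inf_eq_left.2 (le_trans hcj le_sup_right),
        inf_eq_left.2 (le_trans hsj le_sup_right)]
      simp [h, (hcov i).lt]
    · have hji : j ≤ i.castSucc := by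
        simpa [Fin.le_def] using Nat.le_of_not_lt h
      have hji' : j ≤ i.succ := le_trans hji (by simp [Fin.le_def])
      rw [keyA x j i.castSucc hji, keyA x j i.succ hji']
      have hab : m i.castSucc ⊓ x ≤ m i.succ ⊓ x :=
        inf_le_inf_right x (hmono (by simp [Fin.le_def]))
      constructor
      · intro hlt
        rcases lt_or_eq_of_le hab with h' | h'
        · exact Or.inr h'
        · rw [h'] at hlt; exact absurd hlt (lt_irrefl _)
      · rintro (h' | h')
        · exact absurd h' h
        · set a := m i.castSucc ⊓ x
          set b := m i.succ ⊓ x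
          have hle : a ⊔ m j ≤ b ⊔ m j := sup_le_sup_right hab _
          rcases lt_or_eq_of_le hle with h'' | h''
          · exact h''
          · exfalso
            have lm := hmod.2 (m j) ⟨j, rfl⟩ a b h'
            have hjb : m j ⊓ b ≤ a := by
              have h1 : m j ⊓ b ≤ m i.castSucc := le_trans inf_le_left (hmono hji)
              have h2 : m j ⊓ b ≤ x := le_trans inf_le_right inf_le_right
              exact le_inf h1 h2
            rw [sup_eq_left.2 hjb, h'', inf_eq_right.2 le_sup_left] at lm
            exact h'.ne lm
  -- characterization for inf
  have hP_inf : ∀ (x : L) (j : Fin (n + 1)) (i : Fin n),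
      (m i.castSucc ⊓ (x ⊓ m j) < m i.succ ⊓ (x ⊓ m j)) ↔
        ((i : ℕ) < (j : ℕ) ∧ m i.castSucc ⊓ x < m i.succ ⊓ x) := by
    intro x j i
    by_cases h : (i : ℕ) < (j : ℕ)
    · have hsj : m i.succ ≤ m j := hmono (by simpa [Fin.le_def] using h)
      have hcj : m i.castSucc ≤ m j := le_trans (hmono (by simp [Fin.le_def])) hsj
      have e1 : m i.castSucc ⊓ (x ⊓ m j) = m i.castSucc ⊓ x := by
        rw [← inf_assoc]; exact inf_eq_left.2 (le_trans inf_le_left hcj)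
      have e2 : m i.succ ⊓ (x ⊓ m j) = m i.succ ⊓ x := by
        rw [← inf_assoc]; exact inf_eq_left.2 (le_trans inf_le_left hsj)
      rw [e1, e2]; simp [h]
    · have hji : j ≤ i.castSucc := by
        simpa [Fin.le_def] using Nat.le_of_not_lt h
      have e1 : m i.castSucc ⊓ (x ⊓ m j) = x ⊓ m j :=
        inf_eq_right.2 (le_trans inf_le_right (hmono hji))
      have e2 : m i.succ ⊓ (x ⊓ m j) = x ⊓ m j :=
        inf_eq_right.2 (le_trans inf_le_right (hmono (le_trans hji (by simp [Fin.le_def]))))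
      rw [e1, e2]; simp [h]
  -- characterization for m j itself
  have hP_mj : ∀ (j : Fin (n + 1)) (i : Fin n),
      (m i.castSucc ⊓ m j < m i.succ ⊓ m j) ↔ (i : ℕ) < (j : ℕ) := by
    intro j i
    by_cases h : (i : ℕ) < (j : ℕ)
    · have hsj : m i.succ ≤ m j := hmono (by simpa [Fin.le_def] using h)
      have hcj : m i.castSucc ≤ m j := le_trans (hmono (by simp [Fin.le_def])) hsj
      rw [inf_eq_left.2 hcj, inf_eq_left.2 hsj]
      simp [h, (hcov i).lt]
    · have hji : j ≤ i.castSucc := by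
        simpa [Fin.le_def] using Nat.le_of_not_lt h
      rw [inf_eq_right.2 (hmono hji),
        inf_eq_right.2 (hmono (le_trans hji (by simp [Fin.le_def])))]
      simp [h]
  -- cardinality of the initial segment
  have hcard : ∀ j : Fin (n + 1),
      (Finset.univ.filter fun i : Fin n => (i : ℕ) < (j : ℕ)).card = (j : ℕ) := by
    intro j
    rcases Nat.lt_or_ge (j : ℕ) n with hj | hj
    · have : (Finset.univ.filter fun i : Fin n => (i : ℕ) < (j : ℕ)) =
          Finset.Iio (⟨(j : ℕ), hj⟩ : Fin n) := by
        ext i; simp [Fin.lt_def]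
      rw [this, Fin.card_Iio]
    · have hj' : (j : ℕ) = n := le_antisymm (Nat.lt_succ_iff.1 j.isLt) hj
      have : (Finset.univ.filter fun i : Fin n => (i : ℕ) < (j : ℕ)) = Finset.univ := by
        ext i; simp [hj', i.isLt]
      rw [this, Finset.card_univ, Fintype.card_fin, hj']
  have hncard : ∀ (p : Fin n → Prop),
      {i : Fin n | p i}.ncard = (Finset.univ.filter p).card := by
    intro p
    rw [Set.ncard_eq_toFinset_card', Set.toFinset_setOf]
  have hρj : ∀ j : Fin (n + 1), ρ (m j) = (j : ℕ) := by
    intro j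
    rw [hρ, hncard]
    rw [show (Finset.univ.filter fun i : Fin n => m i.castSucc ⊓ m j < m i.succ ⊓ m j) =
        Finset.univ.filter fun i : Fin n => (i : ℕ) < (j : ℕ) from
      Finset.filter_congr (fun i _ => by simp [hP_mj j i])]
    exact hcard j
  refine ⟨?_, hρj⟩
  intro x j
  rw [hρ (x ⊔ m j), hρ (x ⊓ m j), hρ x, hρj j, hncard, hncard, hncard]
  rw [show (Finset.univ.filter fun i : Fin n =>
        m i.castSucc ⊓ (x ⊔ m j) < m i.succ ⊓ (x ⊔ m j)) =
      (Finset.univ.filter fun i : Fin n => (i : ℕ) < (j : ℕ)) ∪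
        (Finset.univ.filter fun i : Fin n => m i.castSucc ⊓ x < m i.succ ⊓ x) from by
    rw [← Finset.filter_or]
    exact Finset.filter_congr (fun i _ => by simp [hP_sup x j i])]
  rw [show (Finset.univ.filter fun i : Fin n =>
        m i.castSucc ⊓ (x ⊓ m j) < m i.succ ⊓ (x ⊓ m j)) =
      (Finset.univ.filter fun i : Fin n => (i : ℕ) < (j : ℕ)) ∩
        (Finset.univ.filter fun i : Fin n => m i.castSucc ⊓ x < m i.succ ⊓ x) from by
    rw [← Finset.filter_and]
    exact Finset.filter_congr (fun i _ => by simp [hP_inf x j i])]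
  rw [Finset.card_union_add_card_inter, hcard j, Nat.add_comm]
end

section
/- Let L be a finite lattice and let M be a chain-modular maximal chain of L consisting of ⊥ = m₀ ⋖ m₁ ⋖ ⋯ ⋖ m_n = ⊤. Define ρ : L → ℕ by ρ(y) = #{ i : 0 ≤ i < n, m_{i+1} ∧ y > m_i ∧ y }. Then ρ is a rank function for L: ρ(⊥) = 0 and whenever y covers x in L, ρ(y) = ρ(x) + 1. In particular, a finite lattice with a chain-modular maximal chain is graded. -/
/-- Let `⊥ = m 0 ⋖ m 1 ⋖ ⋯ ⋖ m n = ⊤` be a chain-modular maximal chain of a finite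
lattice, and let `ρ y = #{i : m (i+1) ⊓ y > m i ⊓ y}`. Then `ρ` is a rank function for
`L`: `ρ ⊥ = 0` and `ρ y = ρ x + 1` whenever `y` covers `x`. In particular, a finite
lattice with a chain-modular maximal chain is graded. -/
theorem chainModular_rho_rankFunction {L : Type*} [Lattice L] [Fintype L] [BoundedOrder L]
    (n : ℕ) (m : Fin (n + 1) → L) (h0 : m 0 = ⊥) (hn : m (Fin.last n) = ⊤)
    (hcov : ∀ i : Fin n, m i.castSucc ⋖ m i.succ)
    (hmod : IsChainModular (Set.range m))
    (ρ : L → ℕ)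
    (hρ : ∀ y : L, ρ y =
      {i : Fin n | m i.castSucc ⊓ y < m i.succ ⊓ y}.ncard) :
    ρ (⊥ : L) = 0 ∧ ∀ x y : L, x ⋖ y → ρ y = ρ x + 1 := by
  classical
  have hmono : StrictMono m := Fin.strictMono_iff_lt_succ.mpr fun i => (hcov i).lt
  have hlm : ∀ i : Fin (n+1), IsLeftModular (m i) := fun i => hmod.2 (m i) ⟨i, rfl⟩
  have hrcm : ∀ i k : Fin (n+1), i < k → ∀ z : L, m i ⊔ (z ⊓ m k) = (m i ⊔ z) ⊓ m k :=
    fun i k h z => hmod.1 (m i) ⟨i, rfl⟩ (m k) ⟨k, rfl⟩ (hmono h) z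
  constructor
  · rw [hρ]
    convert Set.ncard_empty (Fin n)
    ext i
    simp
  · intro x y hxy
    rw [hρ, hρ]
    have hxley : x ≤ y := hxy.le
    -- the set of indices where m k ⊓ y is not below x
    set T : Finset (Fin (n+1)) := Finset.univ.filter (fun i => ¬ m i ⊓ y ≤ x) with hT
    have hlastT : Fin.last n ∈ T := by
      simp only [hT, Finset.mem_filter, Finset.mem_univ, true_and, hn, top_inf_eq]
      exact fun h => absurd (le_antisymm hxley h) hxy.lt.ne
    set j : Fin (n+1) := T.min' ⟨_, hlastT⟩ with hj
    have hjT : j ∈ T := T.min'_mem _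
    have hjnle : ¬ m j ⊓ y ≤ x := by
      have := hjT; simp only [hT, Finset.mem_filter] at this; exact this.2
    have hA : ∀ k : Fin (n+1), k < j → m k ⊓ y = m k ⊓ x := by
      intro k hk
      have hkx : m k ⊓ y ≤ x := by
        by_contra h
        have : k ∈ T := by simp only [hT, Finset.mem_filter, Finset.mem_univ, true_and]; exact h
        exact absurd (T.min'_le k this) (not_le.mpr hk)
      exact le_antisymm (le_inf inf_le_left hkx) (inf_le_inf_left _ hxley)
    have hyj : y ≤ x ⊔ m j := by
      have h1 : x < x ⊔ (m j ⊓ y) := left_lt_sup.mpr hjnle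
      have h2 : x ⊔ (m j ⊓ y) ≤ y := sup_le hxley inf_le_right
      have h3 : x ⊔ (m j ⊓ y) = y := (hxy.eq_or_eq h1.le h2).resolve_left h1.ne'
      calc y = x ⊔ (m j ⊓ y) := h3.symm
        _ ≤ x ⊔ m j := sup_le_sup_left inf_le_left _
    have hj0 : j ≠ 0 := by
      intro h
      apply hjnle
      rw [h, h0, bot_inf_eq]
      exact bot_le
    have hjv1 : 1 ≤ j.val := Nat.one_le_iff_ne_zero.mpr (fun h => hj0 (Fin.ext h))
    have hjvn : j.val ≤ n := Nat.lt_succ_iff.mp j.isLt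
    set i₀ : Fin n := ⟨j.val - 1, by omega⟩ with hi₀
    have hsucc : i₀.succ = j := by
      apply Fin.ext
      simp only [Fin.val_succ, hi₀]
      omega
    have hcast : i₀.castSucc < j := by
      rw [Fin.lt_def]
      simp only [Fin.coe_castSucc, hi₀]
      omega
    -- key equivalence for indices above j
    have hup : ∀ i : Fin n, j ≤ i.castSucc →
        (m i.castSucc ⊓ y < m i.succ ⊓ y ↔ m i.castSucc ⊓ x < m i.succ ⊓ x) := by
      intro i hi
      have hmle : m i.castSucc ≤ m i.succ := (hcov i).le
      have hley : m i.castSucc ⊓ y ≤ m i.succ ⊓ y := inf_le_inf_right _ hmle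
      have hlex : m i.castSucc ⊓ x ≤ m i.succ ⊓ x := inf_le_inf_right _ hmle
      rw [lt_iff_le_and_ne, lt_iff_le_and_ne]
      simp only [hley, hlex, true_and]
      constructor
      · intro hne heq
        apply hne
        -- from m i.castSucc ⊓ x = m i.succ ⊓ x deduce same for y
        have hyi : y ≤ x ⊔ m i.castSucc :=
          hyj.trans (sup_le_sup_left (hmono.monotone hi) _)
        have hxy2 : x ⊔ (m i.castSucc ⊓ y) = y := by
          rw [hlm i.castSucc x y hxy.lt, inf_eq_right.mpr hyi]
        have h1 : m i.castSucc ⊔ (x ⊓ m i.succ) = m i.castSucc := by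
          refine sup_eq_left.mpr ?_
          rw [inf_comm, ← heq]
          exact inf_le_left
        have h2 : (m i.castSucc ⊔ x) ⊓ m i.succ = m i.castSucc := by
          rw [← hrcm i.castSucc i.succ Fin.castSucc_lt_succ x, h1]
        have h3 : m i.succ ⊓ y ≤ m i.castSucc := by
          calc m i.succ ⊓ y = m i.succ ⊓ (x ⊔ (m i.castSucc ⊓ y)) := by rw [hxy2]
            _ ≤ m i.succ ⊓ (x ⊔ m i.castSucc) :=
                inf_le_inf_left _ (sup_le_sup_left inf_le_left _)
            _ = m i.castSucc := by rw [inf_comm, sup_comm, h2]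
        exact le_antisymm hley (le_inf h3 inf_le_right)
      · intro hne heq
        apply hne
        calc m i.castSucc ⊓ x = (m i.castSucc ⊓ y) ⊓ x := by
              rw [inf_assoc, inf_eq_right.mpr hxley]
          _ = (m i.succ ⊓ y) ⊓ x := by rw [heq]
          _ = m i.succ ⊓ x := by rw [inf_assoc, inf_eq_right.mpr hxley]
    -- i₀ is in S_y
    have hi₀y : m i₀.castSucc ⊓ y < m i₀.succ ⊓ y := by
      refine lt_of_le_of_ne (inf_le_inf_right _ (hcov i₀).le) ?_
      intro heq
      apply hjnle
      rw [← hsucc, ← heq, hA i₀.castSucc hcast]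
      exact inf_le_right
    -- i₀ is not in S_x
    have hi₀x : ¬ m i₀.castSucc ⊓ x < m i₀.succ ⊓ x := by
      intro hlt
      have hne : ¬ x ⊓ m i₀.succ ≤ m i₀.castSucc := by
        intro h
        have : m i₀.succ ⊓ x ≤ m i₀.castSucc ⊓ x := le_inf (inf_comm x _ ▸ h) inf_le_right
        exact absurd (le_antisymm this hlt.le) hlt.ne'
      have h1 : m i₀.castSucc < m i₀.castSucc ⊔ (x ⊓ m i₀.succ) := left_lt_sup.mpr hne
      have h2 : m i₀.castSucc ⊔ (x ⊓ m i₀.succ) ≤ m i₀.succ :=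
        sup_le (hcov i₀).le inf_le_right
      have h3 : m i₀.castSucc ⊔ (x ⊓ m i₀.succ) = m i₀.succ :=
        ((hcov i₀).eq_or_eq h1.le h2).resolve_left h1.ne'
      have h4 : m i₀.succ ≤ m i₀.castSucc ⊔ x := by
        calc m i₀.succ = (m i₀.castSucc ⊔ x) ⊓ m i₀.succ := by
              rw [← hrcm i₀.castSucc i₀.succ Fin.castSucc_lt_succ x, h3]
          _ ≤ m i₀.castSucc ⊔ x := inf_le_left
      apply hjnle
      calc m j ⊓ y = m i₀.succ ⊓ y := by rw [hsucc]
        _ ≤ (m i₀.castSucc ⊔ x) ⊓ y := inf_le_inf_right _ h4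
        _ = (x ⊔ m i₀.castSucc) ⊓ y := by rw [sup_comm]
        _ = x ⊔ (m i₀.castSucc ⊓ y) := (hlm i₀.castSucc x y hxy.lt).symm
        _ = x ⊔ (m i₀.castSucc ⊓ x) := by rw [hA i₀.castSucc hcast]
        _ = x := sup_eq_left.mpr inf_le_right
    have hSet : {i : Fin n | m i.castSucc ⊓ y < m i.succ ⊓ y}
        = insert i₀ {i : Fin n | m i.castSucc ⊓ x < m i.succ ⊓ x} := by
      ext i
      simp only [Set.mem_setOf_eq, Set.mem_insert_iff]
      rcases lt_trichotomy (i.succ : Fin (n+1)) j with hlt | heq | hgt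
      · -- both intersections agree with x
        have h1 : m i.castSucc ⊓ y = m i.castSucc ⊓ x :=
          hA _ (lt_of_le_of_lt (Fin.castSucc_le_succ i) hlt)
        have h2 : m i.succ ⊓ y = m i.succ ⊓ x := hA _ hlt
        rw [h1, h2]
        constructor
        · exact Or.inr
        · rintro (rfl | h)
          · exact absurd (hsucc ▸ hlt) (lt_irrefl _)
          · exact h
      · have : i = i₀ := by
          apply Fin.ext
          have := congrArg Fin.val heq
          simp only [Fin.val_succ] at this
          simp only [hi₀]
          omega
        subst this
        exact iff_of_true hi₀y (Or.inl rfl)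
      · have hge : j ≤ i.castSucc := by
          rw [Fin.le_def]
          have := hgt
          rw [Fin.lt_def] at this
          simp only [Fin.val_succ] at this
          simp only [Fin.coe_castSucc]
          omega
        rw [hup i hge]
        constructor
        · exact Or.inr
        · rintro (rfl | h)
          · exact absurd (hsucc ▸ hgt) (lt_irrefl _)
          · exact h
    have hnotmem : i₀ ∉ {i : Fin n | m i.castSucc ⊓ x < m i.succ ⊓ x} := hi₀x
    rw [hSet, Set.ncard_insert_of_notMem hnotmem (Set.toFinite _)]
end

section
/- Let L be a finite lattice and let M be a maximal chain consisting of ⊥ = m₀ ⋖ m₁ ⋖ ⋯ ⋖ m_n = ⊤. If each m_i is left-modular, and for each i the cover pair m_i ⋖ m_{i+1} satisfies the right chain-modular identity (i.e., for all z ∈ L, m_i ∨ (z ∧ m_{i+1}) = (m_i ∨ z) ∧ m_{i+1}), then M is chain-modular, i.e., for all indices i < j and all z ∈ L, m_i ∨ (z ∧ m_j) = (m_i ∨ z) ∧ m_j. -/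
lemma step_aux {L : Type*} [Lattice L] {a b c : L} (hab_le : a ≤ b) (hbc_le : b ≤ c)
    (hab : ∀ z : L, a ⊔ (z ⊓ b) = (a ⊔ z) ⊓ b)
    (hbc : ∀ z : L, b ⊔ (z ⊓ c) = (b ⊔ z) ⊓ c)
    (hb : IsLeftModular b) (z : L) : a ⊔ (z ⊓ c) = (a ⊔ z) ⊓ c := by
  set s := a ⊔ (z ⊓ c) with hs
  set t := (a ⊔ z) ⊓ c with ht
  have hst : s ≤ t :=
    sup_le (le_inf le_sup_left (hab_le.trans hbc_le))
      (le_inf (inf_le_left.trans le_sup_right) inf_le_right)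
  have h1 : t ≤ b ⊔ s := by
    have : t ≤ (b ⊔ z) ⊓ c :=
      inf_le_inf_right _ (sup_le (hab_le.trans le_sup_left) le_sup_right)
    calc t ≤ (b ⊔ z) ⊓ c := this
      _ = b ⊔ (z ⊓ c) := (hbc z).symm
      _ ≤ b ⊔ s := sup_le le_sup_left (le_sup_right.trans le_sup_right)
  have h2 : b ⊓ t ≤ s := by
    have hbt : b ⊓ t = (a ⊔ z) ⊓ b := by
      rw [ht, inf_comm b, inf_assoc, inf_comm c b, inf_eq_left.mpr hbc_le]
    rw [hbt, ← hab z]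
    exact sup_le le_sup_left ((inf_le_inf_left _ hbc_le).trans le_sup_right)
  rcases eq_or_lt_of_le hst with h | h
  · exact h
  · have := hb s t h
    have htle : t ≤ s := by
      have : s ⊔ (b ⊓ t) = t := by
        rw [this, sup_comm s b, inf_eq_right.mpr h1]
      calc t = s ⊔ (b ⊓ t) := this.symm
        _ ≤ s := sup_le le_rfl h2
    exact le_antisymm hst htle

/-- If `⊥ = m 0 ⋖ m 1 ⋖ ⋯ ⋖ m n = ⊤` is a maximal chain of a finite lattice consisting of
left-modular elements such that each cover pair satisfies the right chain-modular
identity, then the chain is chain-modular: the identity holds for all pairs `m i < m j`. -/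
theorem chainModular_of_covers {L : Type*} [Lattice L] [Fintype L] [BoundedOrder L]
    (n : ℕ) (m : Fin (n + 1) → L) (h0 : m 0 = ⊥) (hn : m (Fin.last n) = ⊤)
    (hcov : ∀ i : Fin n, m i.castSucc ⋖ m i.succ)
    (hlm : ∀ i : Fin (n + 1), IsLeftModular (m i))
    (hcovmod : ∀ i : Fin n, ∀ z : L,
      m i.castSucc ⊔ (z ⊓ m i.succ) = (m i.castSucc ⊔ z) ⊓ m i.succ) :
    ∀ i j : Fin (n + 1), i < j → ∀ z : L, m i ⊔ (z ⊓ m j) = (m i ⊔ z) ⊓ m j := by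
  intro i j hij
  obtain ⟨d, hd⟩ : ∃ d : ℕ, (j : ℕ) = (i : ℕ) + d + 1 := ⟨j - i - 1, by omega⟩
  induction d generalizing j with
  | zero =>
    have hi : (i : ℕ) < n := by omega
    have e1 : i = (⟨i, hi⟩ : Fin n).castSucc := by ext; simp
    have e2 : j = (⟨i, hi⟩ : Fin n).succ := by ext; simp; omega
    rw [e1, e2]
    exact hcovmod ⟨i, hi⟩
  | succ d ih =>
    have hjn : (j : ℕ) - 1 < n := by omega
    set k : Fin n := ⟨(j : ℕ) - 1, hjn⟩ with hk
    have ej : j = k.succ := by ext; simp [hk]; omega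
    have hij' : i < k.castSucc := by
      rw [Fin.lt_def]; simp [hk]; omega
    have hd' : (k.castSucc : ℕ) = (i : ℕ) + d + 1 := by simp [hk]; omega
    have hab := ih k.castSucc hij' hd'
    have hab_le : m i ≤ m k.castSucc := by
      have := hab ⊥
      simp only [bot_inf_eq, sup_bot_eq] at this
      exact le_of_inf_eq this.symm
    rw [ej]
    exact fun z => step_aux hab_le (hcov k).le hab (hcovmod k)
      (hlm k.castSucc) z
end
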